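/- arXiv:1501.00288 — 8 statements merged into one kernel-verified Lean document; each statement's English description precedes it below -/
import Mathlib

section
/- Let T be a finite tree and (T, Q) a tree-decomposition of an instance of problem GB, and let (X̂, λ̂) be a feasible solution of LP-GB. Then for every nonempty subtree T̃ of T (i.e., a nonempty connected subgraph of T), there exist an integer k ≥ 1, reals μ^1, …, μ^k with 0 < μ^ℓ ≤ 1 and Σ_{ℓ=1}^k μ^ℓ = 1, and vectors x^1, …, x^k ∈ {0,1}^{𝒱(T̃)}, where 𝒱(T̃) = ∪_{t ∈ V(T̃)} Q_t, such that: (a) for every 1 ≤ ℓ ≤ k and every constraint i with K[i] ⊆ Q_t for some t ∈ V(T̃), the restriction of x^ℓ to K[i] lies in S^i; and (b) for every t ∈ V(T̃) and every (Y, N) ∈ Ω_t, X̂[Y, N] = Σ_{ℓ=1}^k μ^ℓ · Π_{j∈Y} x^ℓ_j · Π_{j∈N} (1 − x^ℓ_j). -/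
open Finset

/-- The real value of a Boolean (0 or 1). -/
def bval (b : Bool) : ℝ := if b then 1 else 0

/-- Restriction of a 0/1 vector on `Fin n` to the coordinates in `A`. -/
def restr {n : ℕ} (x : Fin n → Bool) (A : Finset (Fin n)) : {j // j ∈ A} → Bool :=
  fun j => x j.val

/-- GB-feasibility: the restriction of `x` to each constraint support `K i` lies in `Sc i`. -/
def GBFeas {n m : ℕ} (K : Fin m → Finset (Fin n))
    (Sc : ∀ i : Fin m, Set ({j // j ∈ K i} → Bool)) (x : Fin n → Bool) : Prop :=
  ∀ i, restr x (K i) ∈ Sc i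

/-- The intersection graph of a GB instance. -/
def interGraph {n m : ℕ} (K : Fin m → Finset (Fin n)) : SimpleGraph (Fin n) where
  Adj j k := j ≠ k ∧ ∃ i, j ∈ K i ∧ k ∈ K i
  symm := by
    constructor
    rintro j k ⟨hne, i, hj, hk⟩
    exact ⟨hne.symm, i, hk, hj⟩
  loopless := by
    constructor
    rintro j ⟨hne, -⟩
    exact hne rfl

/-- Tree-decomposition of a graph `H`: `T` is a finite tree, every vertex of `H` appears in a
set of bags inducing a (nonempty) connected subgraph of `T`, and each edge of `H` is contained
in some bag. -/
def IsTreeDecomp {V τ : Type} (H : SimpleGraph V) (T : SimpleGraph τ) (Q : τ → Finset V) : Prop :=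
  T.IsTree ∧ (∀ v : V, (T.induce {t | v ∈ Q t}).Connected) ∧
    (∀ u v : V, H.Adj u v → ∃ t, u ∈ Q t ∧ v ∈ Q t)

/-- `F t`: 0/1 vectors on `Q t` (canonically extended by `false` off `Q t`), satisfying every
constraint whose support is contained in `Q t`. -/
def Ffeas {n m : ℕ} {τ : Type} (K : Fin m → Finset (Fin n))
    (Sc : ∀ i : Fin m, Set ({j // j ∈ K i} → Bool)) (Q : τ → Finset (Fin n)) (t : τ) :
    Set (Fin n → Bool) :=
  {v | (∀ j, j ∉ Q t → v j = false) ∧ ∀ i, K i ⊆ Q t → restr v (K i) ∈ Sc i}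

/-- `Ω t`: pairs `(Y, N)` of disjoint subsets of `Q t` such that either `|Y| ≤ 1` and `N = ∅`,
or `(Y, N)` is a partition of `Q t ∩ Q t'` for some neighbor `t'` of `t` in `T`. -/
def Omega {n : ℕ} {τ : Type} (T : SimpleGraph τ) (Q : τ → Finset (Fin n)) (t : τ) :
    Set (Finset (Fin n) × Finset (Fin n)) :=
  {YN | Disjoint YN.1 YN.2 ∧ YN.1 ∪ YN.2 ⊆ Q t ∧
    ((YN.1.card ≤ 1 ∧ YN.2 = ∅) ∨ ∃ t', T.Adj t t' ∧ YN.1 ∪ YN.2 = Q t ∩ Q t')}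

/-- Feasibility for the linear system LP-GB (λ-variables are extended by `0` off `F t`). -/
def LPGBFeas {n m : ℕ} {τ : Type} (K : Fin m → Finset (Fin n))
    (Sc : ∀ i : Fin m, Set ({j // j ∈ K i} → Bool))
    (T : SimpleGraph τ) (Q : τ → Finset (Fin n))
    (X : Finset (Fin n) × Finset (Fin n) → ℝ) (lam : τ → (Fin n → Bool) → ℝ) : Prop :=
  (∀ t v, v ∉ Ffeas K Sc Q t → lam t v = 0) ∧
  (∀ t v, 0 ≤ lam t v) ∧
  (∀ t, ∑ v : Fin n → Bool, lam t v = 1) ∧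
  (∀ t, ∀ YN ∈ Omega T Q t,
    X YN = ∑ v : Fin n → Bool,
      lam t v * (∏ j ∈ YN.1, bval (v j)) * (∏ j ∈ YN.2, (1 - bval (v j))))

/-- Feasibility for the linear system LPz (λ-variables are extended by `0` off `F t`). -/
def LPzFeas {n m : ℕ} {τ : Type} (K : Fin m → Finset (Fin n))
    (Sc : ∀ i : Fin m, Set ({j // j ∈ K i} → Bool))
    (T : SimpleGraph τ) (Q : τ → Finset (Fin n))
    (Z : Finset (Fin n) → ℝ) (lam : τ → (Fin n → Bool) → ℝ) : Prop :=
  (∀ t v, v ∉ Ffeas K Sc Q t → lam t v = 0) ∧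
  (∀ t v, 0 ≤ lam t v) ∧
  (∀ t, ∑ v : Fin n → Bool, lam t v = 1) ∧
  (∀ t, ∀ S : Finset (Fin n), S ⊆ Q t →
    Z S = ∑ v ∈ Finset.univ.filter (fun v : Fin n → Bool => ∀ j ∈ S, v j = true), lam t v)

/-! Induction on the subtree `U`. A single bag `{t}` is decomposed by `λ^t` itself. Otherwise
remove a leaf `t'` of `U`, attached to `t`: by the tree-decomposition property the bags of
`U \ {t'}` meet `Q t'` only inside `I = Q t ∩ Q t'`. The partitions of `I` lie in both `Ω_t`
and `Ω_t'`, so the LP constraints say that the decomposition over `U \ {t'}` and `λ^{t'}` give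
the same distribution of the restriction to `I`. Coupling the two conditionally independently
given that restriction and taking coordinatewise the union of the paired vectors yields a
decomposition over `U`. -/

open SimpleGraph

namespace SimpleGraph

variable {V : Type*} {G : SimpleGraph V}

theorem IsAcyclic.mem_of_mem_support_of_isPath (hG : G.IsAcyclic) {A : Set V}
    (hA : (G.induce A).Connected) {a b : V} (ha : a ∈ A) (hb : b ∈ A) {p : G.Walk a b}
    (hp : p.IsPath) {x : V} (hx : x ∈ p.support) : x ∈ A := by
  obtain ⟨q, hq⟩ := hA.exists_isPath ⟨a, ha⟩ ⟨b, hb⟩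
  have hpq : p.support = (q.map (Embedding.induce A).toHom).support :=
    congrArg (fun P : G.Path a b => P.1.support) <|
      (hG.subsingleton_path a b).elim ⟨p, hp⟩ ⟨_, hq.map Subtype.val_injective⟩
  rw [hpq, Walk.support_map] at hx
  obtain ⟨y, -, rfl⟩ := List.mem_map.mp hx
  exact y.2

theorem IsAcyclic.exists_leaf_of_connected_induce [Finite V] (hG : G.IsAcyclic) {U : Set V}
    (hU : (G.induce U).Connected) (hnt : U.Nontrivial) :
    ∃ v ∈ U, ∃ u ∈ U, G.Adj v u ∧ (∀ w ∈ U, G.Adj v w → w = u) ∧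
      (G.induce (U \ {v})).Connected := by
  classical
  have : Fintype U := Fintype.ofFinite U
  have : Nontrivial U := hnt.coe_sort
  have hTree : (G.induce U).IsTree := ⟨hU, hG.induce U⟩
  obtain ⟨v, hv⟩ := hTree.exists_vert_degree_one_of_nontrivial
  obtain ⟨u, hvu, hu⟩ := degree_eq_one_iff_existsUnique_adj.mp hv
  refine ⟨v, v.2, u, u.2, hvu, fun w hw hvw => congrArg Subtype.val (hu ⟨w, hw⟩ hvw), ?_⟩
  refine (connected_iff _).mpr ⟨?_, ⟨u, u.2, fun h => hvu.ne' (Subtype.ext h)⟩⟩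
  rintro ⟨a, haU, ha⟩ ⟨b, hbU, hb⟩
  obtain ⟨p, hp⟩ := hU.exists_isPath ⟨a, haU⟩ ⟨b, hbU⟩
  have hvp : v ∉ p.support :=
    hp.isTrail.not_mem_support_of_subsingleton_neighborSet
      (fun h => ha (congrArg Subtype.val h.symm)) (fun h => hb (congrArg Subtype.val h.symm))
      (fun w hw w' hw' => (hu w hw).trans (hu w' hw').symm)
  refine ⟨(p.map (Embedding.induce U).toHom).induce (U \ {v.1}) ?_⟩
  intro x hx
  rw [Walk.support_map] at hx
  obtain ⟨y, hy, rfl⟩ := List.mem_map.mp hx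
  exact ⟨y.2, fun h => hvp (Subtype.ext h ▸ hy)⟩

end SimpleGraph

theorem IsTreeDecomp.mem_of_mem_leaf {V τ : Type} {H : SimpleGraph V} {T : SimpleGraph τ}
    {Q : τ → Finset V} (hTD : IsTreeDecomp H T Q) {U : Set τ} (hU : (T.induce U).Connected)
    {t t' : τ} (ht' : t' ∈ U) (hleaf : ∀ r ∈ U, T.Adj t' r → r = t) {s : τ} (hs : s ∈ U)
    (hst' : s ≠ t') {j : V} (hjs : j ∈ Q s) (hjt' : j ∈ Q t') : j ∈ Q t := by
  obtain ⟨p, hp⟩ := hTD.1.connected.exists_isPath s t'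
  have hpen : p.penultimate ∈ p.support := p.getVert_mem_support _
  have hadj : T.Adj p.penultimate t' := p.adj_penultimate (Walk.not_nil_of_ne hst')
  rw [← hleaf _ (hTD.1.isAcyclic.mem_of_mem_support_of_isPath hU hs ht' hp hpen) hadj.symm]
  exact hTD.1.isAcyclic.mem_of_mem_support_of_isPath (A := {r | j ∈ Q r}) (hTD.2.1 j) hjs hjt'
    hp hpen

section Coupling

variable {α β γ : Type*} [Fintype α] [Fintype β] [DecidableEq γ]

/-- The two families are coupled conditionally independently given the common value of `p` and
`q`: `π (a, b) = ρ a * σ b / C c` with `C c` the common mass of the value `c`. -/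
theorem exists_coupling {ρ : α → ℝ} {σ : β → ℝ} (hρ : 0 ≤ ρ) (hσ : 0 ≤ σ) (p : α → γ)
    (q : β → γ) (h : ∀ c, ∑ a with p a = c, ρ a = ∑ b with q b = c, σ b) :
    ∃ π : α × β → ℝ, 0 ≤ π ∧ (∀ a, ∑ b, π (a, b) = ρ a) ∧ (∀ b, ∑ a, π (a, b) = σ b) ∧
      ∀ a b, π (a, b) ≠ 0 → p a = q b := by
  set C : γ → ℝ := fun c => ∑ b with q b = c, σ b
  have cancel : ∀ {c : γ} {r : ℝ}, 0 ≤ r → r ≤ C c → r * C c / C c = r := by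
    intro c r hr hrC
    rcases eq_or_ne (C c) 0 with hC | hC
    · rw [hC, div_zero, le_antisymm (hC ▸ hrC) hr]
    · exact mul_div_cancel_right₀ r hC
  refine ⟨fun ab => if p ab.1 = q ab.2 then ρ ab.1 * σ ab.2 / C (q ab.2) else 0, ?_, ?_, ?_, ?_⟩
  · rintro ⟨a, b⟩
    dsimp only
    split_ifs
    · exact div_nonneg (mul_nonneg (hρ a) (hσ b)) (sum_nonneg fun b _ => hσ b)
    · exact le_rfl
  · intro a
    have hle : ρ a ≤ C (p a) :=
      (single_le_sum (f := ρ) (s := {a' | p a' = p a}) (fun a _ => hρ a)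
        (mem_filter.mpr ⟨mem_univ a, rfl⟩)).trans_eq (h (p a))
    calc ∑ b, (if p a = q b then ρ a * σ b / C (q b) else 0)
        = ∑ b with q b = p a, ρ a * σ b / C (p a) := by
          rw [sum_filter]
          refine sum_congr rfl fun b _ => ?_
          by_cases hb : q b = p a
          · rw [if_pos hb.symm, if_pos hb, hb]
          · rw [if_neg (Ne.symm hb), if_neg hb]
      _ = ρ a * C (p a) / C (p a) := by rw [← sum_div, ← mul_sum]
      _ = ρ a := cancel (hρ a) hle
  · intro b
    have hle : σ b ≤ C (q b) := single_le_sum (fun b _ => hσ b) (mem_filter.mpr ⟨mem_univ b, rfl⟩)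
    calc ∑ a, (if p a = q b then ρ a * σ b / C (q b) else 0)
        = (∑ a with p a = q b, ρ a) * σ b / C (q b) := by
          rw [sum_filter, sum_mul, sum_div]
          exact sum_congr rfl fun a _ => by split_ifs <;> simp
      _ = σ b * C (q b) / C (q b) := by rw [h, mul_comm]
      _ = σ b := cancel (hσ b) hle
  · intro a b hab
    by_contra hne
    exact hab (if_neg hne)

theorem sum_mul_fst_of_marginal {π : α × β → ℝ} {ρ : α → ℝ} (h : ∀ a, ∑ b, π (a, b) = ρ a)
    (g : α → ℝ) : ∑ ab, π ab * g ab.1 = ∑ a, ρ a * g a := by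
  simp only [Fintype.sum_prod_type, ← sum_mul, h]

theorem sum_mul_snd_of_marginal {π : α × β → ℝ} {σ : β → ℝ} (h : ∀ b, ∑ a, π (a, b) = σ b)
    (g : β → ℝ) : ∑ ab, π ab * g ab.2 = ∑ b, σ b * g b := by
  simp only [Fintype.sum_prod_type_right, ← sum_mul, h]

end Coupling

theorem exists_fin_enum_support {α : Type*} [Fintype α] (ρ : α → ℝ) :
    ∃ (k : ℕ) (e : Fin k → α), (∀ ℓ, ρ (e ℓ) ≠ 0) ∧
      ∀ g : α → ℝ, ∑ ℓ, ρ (e ℓ) * g (e ℓ) = ∑ a, ρ a * g a := by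
  classical
  set s := ({a | ρ a ≠ 0} : Finset α)
  refine ⟨s.card, fun ℓ => s.equivFin.symm ℓ, fun ℓ => (mem_filter.mp (s.equivFin.symm ℓ).2).2,
    fun g => ?_⟩
  rw [Equiv.sum_comp s.equivFin.symm (fun a : s => ρ a * g a), sum_coe_sort s fun a => ρ a * g a]
  exact sum_subset (subset_univ s) fun a _ ha => by simp_all [s]

theorem Set.EqOn.or_left {ι : Type*} {A B : Set ι} {x y : ι → Bool}
    (hy : ∀ j ∉ B, y j = false) (hxy : Set.EqOn x y (A ∩ B)) :
    Set.EqOn (fun j => x j || y j) x A := by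
  intro j hj
  change (x j || y j) = x j
  by_cases hjB : j ∈ B
  · rw [← hxy ⟨hj, hjB⟩, Bool.or_self]
  · rw [hy j hjB, Bool.or_false]

theorem Set.EqOn.or_right {ι : Type*} {A B : Set ι} {x y : ι → Bool}
    (hx : ∀ j ∉ A, x j = false) (hxy : Set.EqOn x y (A ∩ B)) :
    Set.EqOn (fun j => x j || y j) y B := by
  intro j hj
  change (x j || y j) = y j
  by_cases hjA : j ∈ A
  · rw [hxy ⟨hjA, hj⟩, Bool.or_self]
  · rw [hx j hjA, Bool.false_or]

section Patterns

variable {n : ℕ}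

def ynIndicator (YN : Finset (Fin n) × Finset (Fin n)) (v : Fin n → Bool) : ℝ :=
  (∏ j ∈ YN.1, bval (v j)) * ∏ j ∈ YN.2, (1 - bval (v j))

theorem ynIndicator_congr {YN : Finset (Fin n) × Finset (Fin n)} {v w : Fin n → Bool}
    (h : Set.EqOn v w ↑(YN.1 ∪ YN.2)) : ynIndicator YN v = ynIndicator YN w := by
  unfold ynIndicator
  congr 1
  · exact prod_congr rfl fun j hj => by rw [h (mem_union_left _ hj)]
  · exact prod_congr rfl fun j hj => by rw [h (mem_union_right _ hj)]

theorem sum_mul_ynIndicator_congr {γ : Type*} [Fintype γ] {π : γ → ℝ} {z z' : γ → Fin n → Bool}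
    {YN : Finset (Fin n) × Finset (Fin n)}
    (h : ∀ c, π c ≠ 0 → Set.EqOn (z c) (z' c) ↑(YN.1 ∪ YN.2)) :
    ∑ c, π c * ynIndicator YN (z c) = ∑ c, π c * ynIndicator YN (z' c) := by
  refine sum_congr rfl fun c _ => ?_
  rcases eq_or_ne (π c) 0 with hc | hc
  · rw [hc, zero_mul, zero_mul]
  · rw [ynIndicator_congr (h c hc)]

def pattern (I : Finset (Fin n)) (w : Fin n → Bool) : Finset (Fin n) × Finset (Fin n) :=
  ({j ∈ I | w j = true}, {j ∈ I | w j = false})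

theorem ynIndicator_pattern (I : Finset (Fin n)) (w v : Fin n → Bool) :
    ynIndicator (pattern I w) v = if restr v I = restr w I then 1 else 0 := by
  have key : ∀ j, (if w j = true then bval (v j) else 1) *
      (if w j = false then 1 - bval (v j) else 1) = if v j = w j then 1 else 0 := by
    intro j
    cases v j <;> cases w j <;> simp [bval]
  rw [ynIndicator, pattern, prod_filter, prod_filter, ← prod_mul_distrib]
  simp only [key, prod_boole, funext_iff, Subtype.forall, restr]
  congr

theorem sum_mul_ynIndicator_pattern {α : Type*} [Fintype α] (ρ : α → ℝ) (x : α → Fin n → Bool)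
    (I : Finset (Fin n)) (w : Fin n → Bool) :
    ∑ a, ρ a * ynIndicator (pattern I w) (x a) = ∑ a with restr (x a) I = restr w I, ρ a := by
  simp only [ynIndicator_pattern, mul_ite, mul_one, mul_zero, sum_filter]

theorem pattern_mem_omega {τ : Type} {T : SimpleGraph τ} {Q : τ → Finset (Fin n)} {t t' : τ}
    (hadj : T.Adj t t') (w : Fin n → Bool) : pattern (Q t ∩ Q t') w ∈ Omega T Q t := by
  have hunion : (pattern (Q t ∩ Q t') w).1 ∪ (pattern (Q t ∩ Q t') w).2 = Q t ∩ Q t' := by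
    ext j
    cases hw : w j <;> simp [pattern, hw]
  refine ⟨disjoint_filter.mpr fun j _ h1 h2 => by simp_all, ?_, Or.inr ⟨t', hadj, hunion⟩⟩
  rw [hunion]
  exact inter_subset_left

theorem restr_surjective (I : Finset (Fin n)) :
    Function.Surjective fun w : Fin n → Bool => restr w I := fun c =>
  ⟨fun j => if h : j ∈ I then c ⟨j, h⟩ else false, funext fun j => by simp [restr, j.2]⟩

end Patterns

section Decomposition

variable {n m : ℕ} {τ : Type} (K : Fin m → Finset (Fin n))
  (Sc : ∀ i : Fin m, Set ({j // j ∈ K i} → Bool)) (T : SimpleGraph τ) (Q : τ → Finset (Fin n))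
  (X : Finset (Fin n) × Finset (Fin n) → ℝ)

/-- A decomposition of `X` over the bags in `U`, with the family `x` indexed by an arbitrary
finite type and zero weights allowed. -/
structure IsDecompOver (U : Set τ) {α : Type} [Fintype α] (ρ : α → ℝ) (x : α → Fin n → Bool) :
    Prop where
  nonneg : 0 ≤ ρ
  sum_eq_one : ∑ a, ρ a = 1
  support : ∀ a, ρ a ≠ 0 → ∀ j, (∀ t ∈ U, j ∉ Q t) → x a j = false
  feasible : ∀ a, ρ a ≠ 0 → ∀ i, (∃ t ∈ U, K i ⊆ Q t) → restr (x a) (K i) ∈ Sc i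
  moments : ∀ t ∈ U, ∀ YN ∈ Omega T Q t, X YN = ∑ a, ρ a * ynIndicator YN (x a)

variable {K Sc T Q X}

/-- The paper's `𝒱(U)`. -/
def bagsUnion (Q : τ → Finset (Fin n)) (U : Set τ) : Set (Fin n) := {j | ∃ t ∈ U, j ∈ Q t}

theorem isDecompOver_singleton {lam : τ → (Fin n → Bool) → ℝ}
    (hfeas : LPGBFeas K Sc T Q X lam) (t : τ) : IsDecompOver K Sc T Q X {t} (lam t) id := by
  obtain ⟨hzero, hnonneg, hsum, hX⟩ := hfeas
  have hF : ∀ v, lam t v ≠ 0 → v ∈ Ffeas K Sc Q t := fun v hv => by_contra fun h => hv (hzero t v h)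
  refine ⟨hnonneg t, hsum t, fun v hv j hj => (hF v hv).1 j (hj t rfl), ?_, ?_⟩
  · rintro v hv i ⟨_, rfl, hKi⟩
    exact (hF v hv).2 i hKi
  · rintro _ rfl YN hYN
    rw [hX _ YN hYN]
    exact sum_congr rfl fun v _ => mul_assoc _ _ _

theorem IsDecompOver.union {U₁ U₂ : Set τ} {α β : Type} [Fintype α] [Fintype β]
    {ρ : α → ℝ} {x : α → Fin n → Bool} {σ : β → ℝ} {y : β → Fin n → Bool}
    (h₁ : IsDecompOver K Sc T Q X U₁ ρ x) (h₂ : IsDecompOver K Sc T Q X U₂ σ y)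
    {t t' : τ} (ht : t ∈ U₁) (ht' : t' ∈ U₂) (hadj : T.Adj t t')
    (hsep : bagsUnion Q U₁ ∩ bagsUnion Q U₂ ⊆ ↑(Q t ∩ Q t')) :
    ∃ π : α × β → ℝ,
      IsDecompOver K Sc T Q X (U₁ ∪ U₂) π fun ab j => x ab.1 j || y ab.2 j := by
  classical
  set I := Q t ∩ Q t'
  have hmarg : ∀ c, ∑ a with restr (x a) I = c, ρ a = ∑ b with restr (y b) I = c, σ b := by
    intro c
    obtain ⟨w, rfl⟩ := restr_surjective I c
    have hΩ' : pattern I w ∈ Omega T Q t' := by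
      have := pattern_mem_omega (Q := Q) hadj.symm w
      rwa [inter_comm] at this
    rw [← sum_mul_ynIndicator_pattern, ← sum_mul_ynIndicator_pattern,
      ← h₁.moments t ht _ (pattern_mem_omega hadj w), ← h₂.moments t' ht' _ hΩ']
  obtain ⟨π, hπ, hfst, hsnd, hπI⟩ := exists_coupling h₁.nonneg h₂.nonneg _ _ hmarg
  have hsupp : ∀ ab, π ab ≠ 0 → ρ ab.1 ≠ 0 ∧ σ ab.2 ≠ 0 := by
    rintro ⟨a, b⟩ hab
    have hpos : 0 < π (a, b) := (hπ (a, b)).lt_of_ne' hab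
    exact ⟨(hpos.trans_le (hfst a ▸ single_le_sum (fun b _ => hπ (a, b)) (mem_univ b))).ne',
      (hpos.trans_le (hsnd b ▸ single_le_sum (fun a _ => hπ (a, b)) (mem_univ a))).ne'⟩
  have hagree : ∀ ab, π ab ≠ 0 →
      Set.EqOn (fun j => x ab.1 j || y ab.2 j) (x ab.1) (bagsUnion Q U₁) ∧
      Set.EqOn (fun j => x ab.1 j || y ab.2 j) (y ab.2) (bagsUnion Q U₂) := by
    rintro ⟨a, b⟩ hab
    have hxy : Set.EqOn (x a) (y b) (bagsUnion Q U₁ ∩ bagsUnion Q U₂) := fun j hj =>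
      congrFun (hπI a b hab) ⟨j, hsep hj⟩
    have hxA : ∀ j ∉ bagsUnion Q U₁, x a j = false := fun j hj =>
      h₁.support a (hsupp _ hab).1 j fun s hs hjs => hj ⟨s, hs, hjs⟩
    have hyB : ∀ j ∉ bagsUnion Q U₂, y b j = false := fun j hj =>
      h₂.support b (hsupp _ hab).2 j fun s hs hjs => hj ⟨s, hs, hjs⟩
    exact ⟨hxy.or_left hyB, hxy.or_right hxA⟩
  refine ⟨π, hπ, ?_, ?_, ?_, ?_⟩
  · rw [Fintype.sum_prod_type]
    simp only [hfst, h₁.sum_eq_one]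
  · intro ab hab j hj
    rw [h₁.support _ (hsupp ab hab).1 j fun s hs => hj s (.inl hs),
      h₂.support _ (hsupp ab hab).2 j fun s hs => hj s (.inr hs), Bool.or_false]
  · rintro ab hab i ⟨s, hs | hs, hKi⟩
    · convert h₁.feasible _ (hsupp ab hab).1 i ⟨s, hs, hKi⟩ using 1
      exact funext fun j => (hagree ab hab).1 ⟨s, hs, hKi j.2⟩
    · convert h₂.feasible _ (hsupp ab hab).2 i ⟨s, hs, hKi⟩ using 1
      exact funext fun j => (hagree ab hab).2 ⟨s, hs, hKi j.2⟩
  · rintro s (hs | hs) YN hYN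
    · rw [h₁.moments s hs YN hYN, ← sum_mul_fst_of_marginal hfst]
      have hYN' : ↑(YN.1 ∪ YN.2) ⊆ bagsUnion Q U₁ := fun j hj => ⟨s, hs, hYN.2.1 hj⟩
      exact sum_mul_ynIndicator_congr fun ab hab => ((hagree ab hab).1.mono hYN').symm
    · rw [h₂.moments s hs YN hYN, ← sum_mul_snd_of_marginal hsnd]
      have hYN' : ↑(YN.1 ∪ YN.2) ⊆ bagsUnion Q U₂ := fun j hj => ⟨s, hs, hYN.2.1 hj⟩
      exact sum_mul_ynIndicator_congr fun ab hab => ((hagree ab hab).2.mono hYN').symm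

theorem exists_isDecompOver [Finite τ] (hTD : IsTreeDecomp (interGraph K) T Q)
    {lam : τ → (Fin n → Bool) → ℝ} (hfeas : LPGBFeas K Sc T Q X lam) (U : Set τ)
    (hUne : U.Nonempty) (hU : (T.induce U).Connected) :
    ∃ (α : Type) (_ : Fintype α) (ρ : α → ℝ) (x : α → Fin n → Bool),
      IsDecompOver K Sc T Q X U ρ x := by
  obtain ⟨t, rfl⟩ | hnt := hUne.exists_eq_singleton_or_nontrivial
  · exact ⟨_, _, _, _, isDecompOver_singleton hfeas t⟩
  obtain ⟨t', ht', t, ht, hadj, hleaf, hconn⟩ :=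
    hTD.1.isAcyclic.exists_leaf_of_connected_induce hU hnt
  have htU : t ∈ U \ {t'} := ⟨ht, hadj.ne'⟩
  obtain ⟨α, _, ρ, x, hd⟩ := exists_isDecompOver hTD hfeas (U \ {t'}) ⟨t, htU⟩ hconn
  have hsep : bagsUnion Q (U \ {t'}) ∩ bagsUnion Q {t'} ⊆ ↑(Q t ∩ Q t') := by
    rintro j ⟨⟨s, ⟨hs, hst'⟩, hjs⟩, ⟨_, rfl, hjt'⟩⟩
    exact mem_inter.mpr ⟨hTD.mem_of_mem_leaf hU ht' hleaf hs hst' hjs hjt', hjt'⟩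
  obtain ⟨π, hπ⟩ := hd.union (isDecompOver_singleton hfeas t') htU rfl hadj.symm hsep
  rw [Set.sdiff_union_of_subset (Set.singleton_subset_iff.mpr ht')] at hπ
  exact ⟨_, _, π, _, hπ⟩
termination_by U.ncard
decreasing_by exact Set.ncard_sdiff_singleton_lt_of_mem ht'

end Decomposition

/-- Theorem: decomposition over a rooted subtree.
Given a tree-decomposition `(T, Q)` of the intersection graph of a GB instance and a feasible
solution `(X, lam)` of LP-GB, for every nonempty connected subgraph `U` of `T` there is a
decomposition of `(X, lam)` over `U`. -/
theorem decomposition_over_subtree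
    {n m : ℕ} {τ : Type} [Fintype τ] (K : Fin m → Finset (Fin n))
    (Sc : ∀ i : Fin m, Set ({j // j ∈ K i} → Bool))
    (T : SimpleGraph τ) (Q : τ → Finset (Fin n))
    (hTD : IsTreeDecomp (interGraph K) T Q)
    (X : Finset (Fin n) × Finset (Fin n) → ℝ) (lam : τ → (Fin n → Bool) → ℝ)
    (hfeas : LPGBFeas K Sc T Q X lam)
    (U : Set τ) (hUne : U.Nonempty) (hU : (T.induce U).Connected) :
    ∃ (k : ℕ) (μ : Fin k → ℝ) (x : Fin k → Fin n → Bool),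
      1 ≤ k ∧
      (∀ ℓ, 0 < μ ℓ ∧ μ ℓ ≤ 1) ∧
      (∑ ℓ, μ ℓ) = 1 ∧
      (∀ ℓ j, (∀ t ∈ U, j ∉ Q t) → x ℓ j = false) ∧
      (∀ ℓ (i : Fin m), (∃ t ∈ U, K i ⊆ Q t) → restr (x ℓ) (K i) ∈ Sc i) ∧
      (∀ t ∈ U, ∀ YN ∈ Omega T Q t,
        X YN = ∑ ℓ, μ ℓ * (∏ j ∈ YN.1, bval (x ℓ j)) * (∏ j ∈ YN.2, (1 - bval (x ℓ j)))) := by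
  obtain ⟨α, _, ρ, x, hd⟩ := exists_isDecompOver hTD hfeas U hUne hU
  obtain ⟨k, e, hne, hsum⟩ := exists_fin_enum_support ρ
  have hsum1 : ∑ ℓ, ρ (e ℓ) = 1 := by simpa [hd.sum_eq_one] using hsum 1
  have hpos : ∀ ℓ, 0 < ρ (e ℓ) := fun ℓ => (hd.nonneg _).lt_of_ne' (hne ℓ)
  refine ⟨k, ρ ∘ e, x ∘ e, ?_, fun ℓ => ⟨hpos ℓ, ?_⟩, hsum1, fun ℓ => hd.support _ (hne ℓ),
    fun ℓ => hd.feasible _ (hne ℓ), fun t ht YN hYN => ?_⟩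
  · exact Nat.one_le_iff_ne_zero.mpr fun hk => by subst hk; simp at hsum1
  · exact hsum1 ▸ single_le_sum (fun ℓ _ => (hpos ℓ).le) (mem_univ ℓ)
  · simp only [hd.moments t ht YN hYN, ← hsum, Function.comp, mul_assoc, ynIndicator]
end

section
/- Let (T, Q) be a tree-decomposition of the intersection graph of an instance of problem GB, and suppose (Z, λ) is a feasible solution of LPz. Then there exist an integer k ≥ 1, nonnegative reals θ_1, …, θ_k with Σ_{i=1}^k θ_i = 1, and GB-feasible vectors y^1, …, y^k ∈ {0,1}^n such that for every t ∈ V(T) and every S ⊆ Q_t, Z_S = Σ { θ_i : 1 ≤ i ≤ k and y^i_j = 1 for all j ∈ S }. -/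
open Finset

namespace LPZAux

open SimpleGraph

variable {τ : Type} {T : SimpleGraph τ}

/-- Any path's support is contained in any walk's support (in an acyclic graph). -/
lemma path_subset_walk (hT : T.IsAcyclic) {a b : τ} {p q : T.Walk a b}
    (hp : p.IsPath) : p.support ⊆ q.support := by
  classical
  have h1 : (⟨p, hp⟩ : T.Path a b) = q.toPath := hT.path_unique _ _
  have h2 : p = q.bypass := congrArg Subtype.val h1
  rw [h2]
  exact SimpleGraph.Walk.support_bypass_subset q

/-- `A` is connected within `T`. -/
def Sub (T : SimpleGraph τ) (A : Set τ) : Prop :=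
  ∀ ⦃a b : τ⦄, a ∈ A → b ∈ A → ∃ w : T.Walk a b, ∀ x ∈ w.support, x ∈ A

lemma path_in (hT : T.IsAcyclic) {A : Set τ} (hA : Sub T A) {a b : τ}
    {p : T.Walk a b} (hp : p.IsPath) (ha : a ∈ A) (hb : b ∈ A) :
    ∀ x ∈ p.support, x ∈ A := by
  obtain ⟨w, hw⟩ := hA ha hb
  exact fun x hx => hw x (path_subset_walk hT hp hx)

lemma sub_inter (hT : T.IsAcyclic) {A B : Set τ} (hA : Sub T A) (hB : Sub T B) :
    Sub T (A ∩ B) := by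
  classical
  intro a b ha hb
  obtain ⟨w, hw⟩ := hA ha.1 hb.1
  refine ⟨w.toPath, fun x hx => ?_⟩
  have hx' : x ∈ (w.toPath : T.Walk a b).support := hx
  constructor
  · exact hw x (SimpleGraph.Walk.support_bypass_subset w hx)
  · exact path_in hT hB w.toPath.2 ha.2 hb.2 x hx

/-- Last vertex on a path satisfying `P`. -/
lemma exists_last [DecidableEq τ] {P : τ → Prop} :
    ∀ {x z : τ} (q : T.Walk x z), q.IsPath → (∃ u ∈ q.support, P u) →
      ∃ m, ∃ hm : m ∈ q.support, P m ∧
        ∀ u ∈ (q.dropUntil m hm).support, P u → u = m := by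
  intro x z q
  induction q with
  | nil =>
    intro _ hex
    obtain ⟨u, hu, hPu⟩ := hex
    simp only [SimpleGraph.Walk.support_nil, List.mem_singleton] at hu
    subst hu
    refine ⟨u, by simp, hPu, ?_⟩
    intro w hw _
    have := SimpleGraph.Walk.support_dropUntil_subset (SimpleGraph.Walk.nil : T.Walk u u)
      (by simp : u ∈ (SimpleGraph.Walk.nil : T.Walk u u).support) hw
    simpa using this
  | @cons x y z h q' ih =>
    intro hp hex
    by_cases hq' : ∃ u ∈ q'.support, P u
    · obtain ⟨m, hm, hPm, hlast⟩ := ih (hp.of_cons) hq'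
      have hmx : x ≠ m := by
        intro hxm; subst hxm
        have : x ∉ q'.support := by
          have := hp.support_nodup
          simp only [SimpleGraph.Walk.support_cons, List.nodup_cons] at this
          exact this.1
        exact this hm
      refine ⟨m, by simp [SimpleGraph.Walk.support_cons, hm], hPm, ?_⟩
      intro u hu hPu
      have hdrop : (SimpleGraph.Walk.cons h q').dropUntil m
          (by simp [SimpleGraph.Walk.support_cons, hm]) = q'.dropUntil m hm := by
        simp only [SimpleGraph.Walk.dropUntil, dif_neg hmx]
      rw [hdrop] at hu
      exact hlast u hu hPu
    · obtain ⟨u, hu, hPu⟩ := hex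
      have hux : u = x := by
        simp only [SimpleGraph.Walk.support_cons, List.mem_cons] at hu
        rcases hu with h1 | h1
        · exact h1
        · exact absurd ⟨u, h1, hPu⟩ hq'
      subst hux
      refine ⟨u, SimpleGraph.Walk.start_mem_support _, hPu, ?_⟩
      intro w hw hPw
      by_contra hne
      have hdrop : (SimpleGraph.Walk.cons h q').dropUntil u
          (SimpleGraph.Walk.start_mem_support _) = SimpleGraph.Walk.cons h q' := by
        simp [SimpleGraph.Walk.dropUntil]
      rw [hdrop] at hw
      simp only [SimpleGraph.Walk.support_cons, List.mem_cons] at hw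
      rcases hw with h1 | h1
      · exact hne h1
      · exact hq' ⟨w, h1, hPw⟩

lemma isPath_append' {a b c : τ} {p : T.Walk a b} {q : T.Walk b c}
    (hp : p.IsPath) (hq : q.IsPath)
    (hj : ∀ x, x ∈ p.support → x ∈ q.support → x = b) : (p.append q).IsPath := by
  rw [SimpleGraph.Walk.isPath_def, SimpleGraph.Walk.support_append, List.nodup_append]
  refine ⟨hp.support_nodup, ?_, ?_⟩
  · have := hq.support_nodup
    rw [SimpleGraph.Walk.support_eq_cons q] at this
    exact (List.nodup_cons.mp this).2
  · intro x hx y hx' hxy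
    subst hxy
    have hxq : x ∈ q.support := by
      rw [SimpleGraph.Walk.support_eq_cons q]; exact List.mem_cons_of_mem _ hx'
    have hxb : x = b := hj x hx hxq
    subst hxb
    have := hq.support_nodup
    rw [SimpleGraph.Walk.support_eq_cons q] at this
    exact (List.nodup_cons.mp this).1 hx'

/-- Median: some vertex lies on all three paths between `x, y, z`. -/
lemma median [DecidableEq τ] (hT : T.IsAcyclic) {x y z : τ} (p : T.Walk x y) (q : T.Walk x z)
    (r : T.Walk y z) (hp : p.IsPath) (hq : q.IsPath) (hr : r.IsPath) :
    ∃ m, m ∈ p.support ∧ m ∈ q.support ∧ m ∈ r.support := by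
  classical
  obtain ⟨m, hmq, hmp, hlast⟩ := exists_last (P := fun u => u ∈ p.support) q hq
    ⟨x, SimpleGraph.Walk.start_mem_support _, SimpleGraph.Walk.start_mem_support _⟩
  refine ⟨m, hmp, hmq, ?_⟩
  set p2 := p.dropUntil m hmp with hp2
  set q2 := q.dropUntil m hmq with hq2
  have hp2path : p2.IsPath := hp.dropUntil hmp
  have hq2path : q2.IsPath := hq.dropUntil hmq
  have hW : (p2.reverse.append q2).IsPath := by
    refine isPath_append' hp2path.reverse hq2path ?_
    intro u hu hu'
    rw [SimpleGraph.Walk.support_reverse, List.mem_reverse] at hu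
    exact hlast u hu' (SimpleGraph.Walk.support_dropUntil_subset p hmp hu)
  have hrW : r = p2.reverse.append q2 :=
    congrArg Subtype.val (hT.path_unique ⟨r, hr⟩ ⟨p2.reverse.append q2, hW⟩)
  rw [hrW, SimpleGraph.Walk.mem_support_append_iff]
  left
  rw [SimpleGraph.Walk.support_reverse, List.mem_reverse]
  exact SimpleGraph.Walk.start_mem_support _


def PCl (T : SimpleGraph τ) (A : Set τ) : Prop := A.Nonempty ∧ Sub T A

lemma helly3 (hT : T.IsAcyclic) {A B C : Set τ} (hA : Sub T A) (hB : Sub T B)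
    (hC : Sub T C) (hAB : (A ∩ B).Nonempty) (hAC : (A ∩ C).Nonempty)
    (hBC : (B ∩ C).Nonempty) : (A ∩ B ∩ C).Nonempty := by
  classical
  obtain ⟨x, hx⟩ := hAB
  obtain ⟨y, hy⟩ := hAC
  obtain ⟨z, hz⟩ := hBC
  obtain ⟨wp, hwp⟩ := hA hx.1 hy.1
  obtain ⟨wq, hwq⟩ := hB hx.2 hz.1
  obtain ⟨wr, hwr⟩ := hC hy.2 hz.2
  obtain ⟨m, hmp, hmq, hmr⟩ := median hT (wp.toPath : T.Walk x y) (wq.toPath : T.Walk x z)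
    (wr.toPath : T.Walk y z) wp.toPath.2 wq.toPath.2 wr.toPath.2
  refine ⟨m, ⟨?_, ?_⟩, ?_⟩
  · exact hwp m (SimpleGraph.Walk.support_bypass_subset wp hmp)
  · exact hwq m (SimpleGraph.Walk.support_bypass_subset wq hmq)
  · exact hwr m (SimpleGraph.Walk.support_bypass_subset wr hmr)

lemma helly_list_aux (hT : T.IsAcyclic) [Nonempty τ] :
    ∀ (k : ℕ) (l : List (Set τ)), l.length ≤ k → (∀ A ∈ l, PCl T A) →
      (∀ A ∈ l, ∀ B ∈ l, (A ∩ B).Nonempty) →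
      (l.foldr (· ∩ ·) Set.univ).Nonempty := by
  intro k
  induction k with
  | zero =>
    intro l hl _ _
    have : l = [] := List.length_eq_zero_iff.mp (Nat.le_zero.mp hl)
    subst this
    simpa using Set.univ_nonempty
  | succ k ih =>
  intro l hl
  match l with
  | [] => intro _ _; simpa using Set.univ_nonempty
  | [A] =>
    intro h1 _
    simp only [List.foldr, Set.inter_univ]
    exact (h1 A (by simp)).1
  | A :: B :: rest =>
    intro h1 h2
    have hstep : ((A ∩ B) :: rest).foldr (· ∩ ·) Set.univ =
        (A :: B :: rest).foldr (· ∩ ·) Set.univ := by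
      simp [Set.inter_assoc]
    rw [← hstep]
    refine ih _ (by simp at hl ⊢; omega) ?_ ?_
    · intro C hC
      rcases List.mem_cons.mp hC with h | h
      · subst h
        refine ⟨h2 A (by simp) B (by simp), sub_inter hT (h1 A (by simp)).2 (h1 B (by simp)).2⟩
      · exact h1 C (by simp [h])
    · intro C hC Dd hDd
      rcases List.mem_cons.mp hC with h | h <;> rcases List.mem_cons.mp hDd with h' | h'
      · subst h h'
        rw [Set.inter_self]
        exact h2 A (by simp) B (by simp)
      · subst h
        have := helly3 hT (h1 A (by simp)).2 (h1 B (by simp)).2 (h1 Dd (by simp [h'])).2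
          (h2 A (by simp) B (by simp)) (h2 A (by simp) Dd (by simp [h']))
          (h2 B (by simp) Dd (by simp [h']))
        exact this
      · subst h'
        have := helly3 hT (h1 A (by simp)).2 (h1 B (by simp)).2 (h1 C (by simp [h])).2
          (h2 A (by simp) B (by simp)) (h2 A (by simp) C (by simp [h]))
          (h2 B (by simp) C (by simp [h]))
        obtain ⟨m, hm⟩ := this
        exact ⟨m, hm.2, hm.1⟩
      · exact h2 C (by simp [h]) Dd (by simp [h'])

lemma mem_foldr_inter {l : List (Set τ)} {t : τ} :
    t ∈ l.foldr (· ∩ ·) Set.univ ↔ ∀ A ∈ l, t ∈ A := by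
  induction l with
  | nil => simp
  | cons A l ih => simp [ih]

/-- connectivity of an induced subgraph gives `Sub`. -/
lemma sub_of_induce_connected {A : Set τ} (h : (T.induce A).Connected) : Sub T A := by
  intro a b ha hb
  obtain ⟨w⟩ := h.preconnected ⟨a, ha⟩ ⟨b, hb⟩
  let f : T.induce A →g T := ⟨Subtype.val, fun {u v} h => h⟩
  refine ⟨w.map f, fun x hx => ?_⟩
  rw [SimpleGraph.Walk.support_map, List.mem_map] at hx
  obtain ⟨u, _, rfl⟩ := hx
  exact u.2

lemma nonempty_of_induce_connected {A : Set τ} (h : (T.induce A).Connected) :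
    A.Nonempty := by
  obtain ⟨⟨a, ha⟩⟩ := h.nonempty
  exact ⟨a, ha⟩

/-- first exit of a walk from a set -/
lemma exists_exit {U : Set τ} :
    ∀ {a b : τ} (w : T.Walk a b), a ∈ U → b ∉ U →
      ∃ x ∈ U, ∃ y, y ∉ U ∧ T.Adj x y := by
  intro a b w
  induction w with
  | nil => intro h h'; exact absurd h h'
  | @cons x y z h w ih =>
    intro hx hz
    by_cases hy : y ∈ U
    · exact ih hy hz
    · exact ⟨x, hx, y, hy, h⟩

/-- uniqueness of the neighbor of `t` inside a connected set not containing `t` -/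
lemma neighbor_unique (hT : T.IsAcyclic) {U : Set τ} (hU : Sub T U) {t t' w : τ}
    (ht : t ∉ U) (ht' : t' ∈ U) (hw : w ∈ U) (h1 : T.Adj t t') (h2 : T.Adj t w) :
    w = t' := by
  classical
  by_contra hne
  obtain ⟨wk, hwk⟩ := hU hw ht'
  have hP1 : (wk.toPath : T.Walk w t').IsPath := wk.toPath.2
  have htP1 : t ∉ (wk.toPath : T.Walk w t').support := fun hc =>
    ht (hwk t (SimpleGraph.Walk.support_bypass_subset wk hc))
  have hP2 : (SimpleGraph.Walk.cons h2.symm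
      (SimpleGraph.Walk.cons h1 SimpleGraph.Walk.nil) : T.Walk w t').IsPath := by
    rw [SimpleGraph.Walk.isPath_def]
    simp only [SimpleGraph.Walk.support_cons, SimpleGraph.Walk.support_nil]
    refine List.nodup_cons.mpr ⟨?_, List.nodup_cons.mpr ⟨?_, List.nodup_singleton _⟩⟩
    · simp only [List.mem_cons]
      rintro (rfl | rfl | hc)
      · exact h2.ne rfl
      · exact hne rfl
      · simp at hc
    · simpa using h1.ne
  have := hT.path_unique ⟨(wk.toPath : T.Walk w t'), hP1⟩
    ⟨SimpleGraph.Walk.cons h2.symm (SimpleGraph.Walk.cons h1 SimpleGraph.Walk.nil), hP2⟩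
  apply htP1
  rw [show (wk.toPath : T.Walk w t') = SimpleGraph.Walk.cons h2.symm
    (SimpleGraph.Walk.cons h1 SimpleGraph.Walk.nil) from congrArg Subtype.val this]
  simp


section Alg

variable {n : ℕ}

/-- moment -/
def Mo (μ : (Fin n → Bool) → ℝ) (S : Finset (Fin n)) : ℝ :=
  ∑ v : Fin n → Bool, if (∀ j ∈ S, v j = true) then μ v else 0

/-- marginal probability of pattern `a` on `D` -/
def marg (μ : (Fin n → Bool) → ℝ) (D : Finset (Fin n)) (a : Fin n → Bool) : ℝ :=
  ∑ v : Fin n → Bool, if (∀ j ∈ D, v j = a j) then μ v else 0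

lemma marg_nonneg {μ : (Fin n → Bool) → ℝ} (hnn : ∀ v, 0 ≤ μ v) (D : Finset (Fin n))
    (a : Fin n → Bool) : 0 ≤ marg μ D a := by
  refine Finset.sum_nonneg fun v _ => ?_
  by_cases h : ∀ j ∈ D, v j = a j
  · rw [if_pos h]; exact hnn v
  · rw [if_neg h]

lemma marg_pattern {μ : (Fin n → Bool) → ℝ} {D : Finset (Fin n)} {a b : Fin n → Bool}
    (hab : ∀ j ∈ D, a j = b j) : marg μ D a = marg μ D b := by
  refine Finset.sum_congr rfl fun v _ => ?_
  have : (∀ j ∈ D, v j = a j) ↔ (∀ j ∈ D, v j = b j) :=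
    ⟨fun h j hj => (h j hj).trans (hab j hj), fun h j hj => (h j hj).trans (hab j hj).symm⟩
  by_cases h : ∀ j ∈ D, v j = a j
  · rw [if_pos h, if_pos (this.mp h)]
  · rw [if_neg h, if_neg (fun hc => h (this.mpr hc))]

lemma marg_zero_forall {μ : (Fin n → Bool) → ℝ} (hnn : ∀ v, 0 ≤ μ v) {D : Finset (Fin n)}
    {a : Fin n → Bool} (h : marg μ D a = 0) :
    ∀ v, (∀ j ∈ D, v j = a j) → μ v = 0 := by
  intro v hv
  have hterm : ∀ w ∈ (Finset.univ : Finset (Fin n → Bool)),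
      0 ≤ if (∀ j ∈ D, w j = a j) then μ w else 0 := by
    intro w _
    by_cases hc : ∀ j ∈ D, w j = a j
    · rw [if_pos hc]; exact hnn w
    · rw [if_neg hc]
  have := (Finset.sum_eq_zero_iff_of_nonneg hterm).mp h v (Finset.mem_univ v)
  rwa [if_pos hv] at this

lemma self_le_marg {μ : (Fin n → Bool) → ℝ} (hnn : ∀ v, 0 ≤ μ v) (D : Finset (Fin n))
    (v : Fin n → Bool) : μ v ≤ marg μ D v := by
  have : μ v = if (∀ j ∈ D, v j = v j) then μ v else 0 := by simp
  rw [this]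
  refine Finset.single_le_sum (f := fun w => if (∀ j ∈ D, w j = v j) then μ w else 0)
    (fun w _ => ?_) (Finset.mem_univ v)
  by_cases hc : ∀ j ∈ D, w j = v j
  · rw [if_pos hc]; exact hnn w
  · rw [if_neg hc]

lemma marg_split {μ : (Fin n → Bool) → ℝ} {D : Finset (Fin n)} {a : Fin n → Bool}
    {j : Fin n} (hj : j ∈ D) (haj : a j = false) :
    marg μ (D.erase j) a = marg μ D (Function.update a j true) + marg μ D a := by
  unfold marg
  rw [← Finset.sum_add_distrib]
  refine Finset.sum_congr rfl fun v _ => ?_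
  by_cases hP : ∀ i ∈ D.erase j, v i = a i
  · by_cases hvj : v j = true
    · have h1 : ∀ i ∈ D, v i = Function.update a j true i := by
        intro i hi
        by_cases hij : i = j
        · subst hij; simp [Function.update_self, hvj]
        · rw [Function.update_of_ne hij]
          exact hP i (Finset.mem_erase.mpr ⟨hij, hi⟩)
      have h2 : ¬ ∀ i ∈ D, v i = a i := by
        intro hc
        have := hc j hj
        rw [haj] at this
        simp [this] at hvj
      rw [if_pos hP, if_pos h1, if_neg h2, add_zero]
    · have hvj' : v j = false := by
        cases hb : v j
        · rfl
        · exact absurd hb hvj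
      have h1 : ¬ ∀ i ∈ D, v i = Function.update a j true i := by
        intro hc
        have := hc j hj
        rw [Function.update_self, hvj'] at this
        exact Bool.false_ne_true this
      have h2 : ∀ i ∈ D, v i = a i := by
        intro i hi
        by_cases hij : i = j
        · subst hij; rw [hvj', haj]
        · exact hP i (Finset.mem_erase.mpr ⟨hij, hi⟩)
      rw [if_pos hP, if_neg h1, if_pos h2, zero_add]
  · have h1 : ¬ ∀ i ∈ D, v i = Function.update a j true i := by
      intro hc
      apply hP
      intro i hi
      have hij := (Finset.mem_erase.mp hi).1
      have := hc i (Finset.mem_erase.mp hi).2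
      rwa [Function.update_of_ne hij] at this
    have h2 : ¬ ∀ i ∈ D, v i = a i := by
      intro hc
      exact hP fun i hi => hc i (Finset.mem_erase.mp hi).2
    rw [if_neg hP, if_neg h1, if_neg h2, add_zero]

lemma marg_eq_of_mo {μ ν : (Fin n → Bool) → ℝ} {D₀ : Finset (Fin n)}
    (h : ∀ S ⊆ D₀, Mo μ S = Mo ν S) :
    ∀ (k : ℕ) (D : Finset (Fin n)) (a : Fin n → Bool), D ⊆ D₀ →
      (D.filter (fun j => a j = false)).card = k → marg μ D a = marg ν D a := by
  intro k
  induction k with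
  | zero =>
    intro D a hD hcard
    have hfe : D.filter (fun j => a j = false) = ∅ := Finset.card_eq_zero.mp hcard
    have hat : ∀ j ∈ D, a j = true := by
      intro j hj
      by_contra hc
      have : a j = false := by
        cases hb : a j
        · rfl
        · exact absurd hb hc
      have : j ∈ D.filter (fun j => a j = false) := Finset.mem_filter.mpr ⟨hj, this⟩
      rw [hfe] at this
      exact absurd this (Finset.notMem_empty j)
    have hμ : marg μ D a = Mo μ D := by
      refine Finset.sum_congr rfl fun v _ => ?_
      have : (∀ j ∈ D, v j = a j) ↔ (∀ j ∈ D, v j = true) :=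
        ⟨fun hh j hj => (hh j hj).trans (hat j hj), fun hh j hj => (hh j hj).trans (hat j hj).symm⟩
      by_cases hc : ∀ j ∈ D, v j = a j
      · rw [if_pos hc, if_pos (this.mp hc)]
      · rw [if_neg hc, if_neg (fun hx => hc (this.mpr hx))]
    have hν : marg ν D a = Mo ν D := by
      refine Finset.sum_congr rfl fun v _ => ?_
      have : (∀ j ∈ D, v j = a j) ↔ (∀ j ∈ D, v j = true) :=
        ⟨fun hh j hj => (hh j hj).trans (hat j hj), fun hh j hj => (hh j hj).trans (hat j hj).symm⟩
      by_cases hc : ∀ j ∈ D, v j = a j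
      · rw [if_pos hc, if_pos (this.mp hc)]
      · rw [if_neg hc, if_neg (fun hx => hc (this.mpr hx))]
    rw [hμ, hν]
    exact h D hD
  | succ k ih =>
    intro D a hD hcard
    have hne : (D.filter (fun j => a j = false)).Nonempty := by
      rw [← Finset.card_pos, hcard]; exact Nat.succ_pos k
    obtain ⟨j, hjf⟩ := hne
    have hjD : j ∈ D := (Finset.mem_filter.mp hjf).1
    have haj : a j = false := (Finset.mem_filter.mp hjf).2
    have heq1 : marg μ D a = marg μ (D.erase j) a - marg μ D (Function.update a j true) := by
      rw [marg_split hjD haj]; ring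
    have heq2 : marg ν D a = marg ν (D.erase j) a - marg ν D (Function.update a j true) := by
      rw [marg_split hjD haj]; ring
    have hf1 : ((D.erase j).filter (fun i => a i = false)).card = k := by
      have : (D.erase j).filter (fun i => a i = false)
          = (D.filter (fun i => a i = false)).erase j := by
        ext i
        simp only [Finset.mem_filter, Finset.mem_erase]
        tauto
      rw [this, Finset.card_erase_of_mem hjf, hcard]
      simp
    have hf2 : (D.filter (fun i => Function.update a j true i = false)).card = k := by
      have : D.filter (fun i => Function.update a j true i = false)
          = (D.filter (fun i => a i = false)).erase j := by
        ext i
        simp only [Finset.mem_filter, Finset.mem_erase]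
        constructor
        · rintro ⟨hi, hup⟩
          by_cases hij : i = j
          · subst hij
            rw [Function.update_self] at hup
            exact absurd hup (by simp)
          · rw [Function.update_of_ne hij] at hup
            exact ⟨hij, hi, hup⟩
        · rintro ⟨hij, hi, hai⟩
          rw [Function.update_of_ne hij]
          exact ⟨hi, hai⟩
      rw [this, Finset.card_erase_of_mem hjf, hcard]
      simp
    rw [heq1, heq2, ih (D.erase j) a ((Finset.erase_subset j D).trans hD) hf1,
      ih D (Function.update a j true) hD hf2]

end Alg


section Main

variable {n m : ℕ} {τ : Type}

lemma ite_sum {α : Type} [Fintype α] {c : Prop} [Decidable c] (f : α → ℝ) :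
    (if c then ∑ x : α, f x else 0) = ∑ x : α, if c then f x else 0 := by
  by_cases h : c
  · simp [h]
  · simp [h]

lemma sum_if_collapse {α β : Type} [Fintype α] [Fintype β] [DecidableEq α]
    (P : α → Prop) [DecidablePred P] (g : β → α) (wt : β → ℝ) :
    (∑ a : α, if P a then (∑ b : β, if g b = a then wt b else 0) else 0)
      = ∑ b : β, if P (g b) then wt b else 0 := by
  rw [show (∑ a : α, if P a then (∑ b : β, if g b = a then wt b else 0) else 0)
      = ∑ a : α, ∑ b : β, if P a then (if g b = a then wt b else 0) else 0 from
    Finset.sum_congr rfl fun a _ => ite_sum _]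
  rw [Finset.sum_comm]
  refine Finset.sum_congr rfl fun b _ => ?_
  have : ∀ a : α, (if P a then (if g b = a then wt b else 0) else 0)
      = if g b = a then (if P a then wt b else 0) else 0 := by
    intro a
    by_cases h1 : P a <;> by_cases h2 : g b = a <;> simp [h1, h2]
  rw [Finset.sum_congr rfl fun a _ => this a]
  rw [Finset.sum_ite_eq (Finset.univ : Finset α) (g b) (fun a => if P a then wt b else 0)]
  simp

/-- A good global distribution relative to a set `U` of bags. -/
def GoodDist (K : Fin m → Finset (Fin n)) (Sc : ∀ i : Fin m, Set ({j // j ∈ K i} → Bool))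
    (Q : τ → Finset (Fin n)) (Z : Finset (Fin n) → ℝ) (U : Finset τ)
    (θ : (Fin n → Bool) → ℝ) : Prop :=
  (∀ v, 0 ≤ θ v) ∧ (∑ v : Fin n → Bool, θ v) = 1 ∧
  (∀ v, θ v ≠ 0 → ∀ i, ∀ t ∈ U, K i ⊆ Q t → restr v (K i) ∈ Sc i) ∧
  (∀ t ∈ U, ∀ S : Finset (Fin n), S ⊆ Q t → Z S = Mo θ S)

lemma merge [DecidableEq τ] (K : Fin m → Finset (Fin n)) (Sc : ∀ i : Fin m, Set ({j // j ∈ K i} → Bool))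
    (Q : τ → Finset (Fin n)) (Z : Finset (Fin n) → ℝ) {U : Finset τ}
    {θ : (Fin n → Bool) → ℝ} (hθ : GoodDist K Sc Q Z U θ)
    {t t' : τ} (ht' : t' ∈ U)
    (hsep : ∀ s ∈ U, ∀ j : Fin n, j ∈ Q t → j ∈ Q s → j ∈ Q t')
    (lamt : (Fin n → Bool) → ℝ)
    (hsupp : ∀ v, lamt v ≠ 0 → v ∈ Ffeas K Sc Q t)
    (hlnn : ∀ v, 0 ≤ lamt v) (hlsum : ∑ v : Fin n → Bool, lamt v = 1)
    (hlmo : ∀ S : Finset (Fin n), S ⊆ Q t → Z S = Mo lamt S) :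
    ∃ θ', GoodDist K Sc Q Z (insert t U) θ' := by
  classical
  obtain ⟨hθnn, hθsum, hθsupp, hθmo⟩ := hθ
  set D := Q t ∩ Q t' with hDdef
  have hDt : D ⊆ Q t := Finset.inter_subset_left
  have hDt' : D ⊆ Q t' := Finset.inter_subset_right
  have hmoeq : ∀ S ⊆ D, Mo θ S = Mo lamt S := by
    intro S hS
    rw [← hθmo t' ht' S (hS.trans hDt'), ← hlmo S (hS.trans hDt)]
  have hmargeq : ∀ a, marg θ D a = marg lamt D a := fun a =>
    marg_eq_of_mo hmoeq ((D.filter (fun j => a j = false)).card) D a (subset_refl D) rfl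
  set wt : (Fin n → Bool) × (Fin n → Bool) → ℝ := fun p =>
    if (0 < marg θ D p.1 ∧ ∀ j ∈ D, p.2 j = p.1 j) then θ p.1 * lamt p.2 / marg θ D p.1
    else 0 with hwt
  set comb : (Fin n → Bool) × (Fin n → Bool) → (Fin n → Bool) := fun p j =>
    if j ∈ Q t then p.2 j else p.1 j with hcomb
  set θ' : (Fin n → Bool) → ℝ := fun w => ∑ p, if comb p = w then wt p else 0 with hθ'
  have hwtp : ∀ p : (Fin n → Bool) × (Fin n → Bool), wt p
      = if (0 < marg θ D p.1 ∧ ∀ j ∈ D, p.2 j = p.1 j)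
        then θ p.1 * lamt p.2 / marg θ D p.1 else 0 := fun p => rfl
  have hwtnn : ∀ p, 0 ≤ wt p := by
    intro p
    rw [hwtp p]
    by_cases h : (0 < marg θ D p.1 ∧ ∀ j ∈ D, p.2 j = p.1 j)
    · rw [if_pos h]
      exact div_nonneg (mul_nonneg (hθnn _) (hlnn _)) (le_of_lt h.1)
    · rw [if_neg h]
  have hwtne : ∀ p, wt p ≠ 0 → θ p.1 ≠ 0 ∧ lamt p.2 ≠ 0 ∧ ∀ j ∈ D, p.2 j = p.1 j := by
    intro p hp
    rw [hwtp p] at hp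
    by_cases h : (0 < marg θ D p.1 ∧ ∀ j ∈ D, p.2 j = p.1 j)
    · rw [if_pos h] at hp
      have h1 : θ p.1 ≠ 0 := by
        intro hc; rw [hc] at hp; simp at hp
      have h2 : lamt p.2 ≠ 0 := by
        intro hc; rw [hc] at hp; simp at hp
      exact ⟨h1, h2, h.2⟩
    · rw [if_neg h] at hp; exact absurd rfl hp
  -- row sums
  have hrow : ∀ u, (∑ v : Fin n → Bool, wt (u, v)) = θ u := by
    intro u
    by_cases hPu : 0 < marg θ D u
    · have hstep : ∀ v : Fin n → Bool, wt (u, v)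
          = (θ u / marg θ D u) * (if (∀ j ∈ D, v j = u j) then lamt v else 0) := by
        intro v
        rw [hwtp (u, v)]
        by_cases hc : ∀ j ∈ D, v j = u j
        · rw [if_pos ⟨hPu, hc⟩, if_pos hc]
          ring
        · rw [if_neg (fun hx => hc hx.2), if_neg hc, mul_zero]
      rw [Finset.sum_congr rfl fun v _ => hstep v, ← Finset.mul_sum]
      have : (∑ v : Fin n → Bool, if (∀ j ∈ D, v j = u j) then lamt v else 0)
          = marg lamt D u := rfl
      rw [this, ← hmargeq u]
      field_simp
    · have hz : marg θ D u = 0 := le_antisymm (not_lt.mp hPu) (marg_nonneg hθnn D u)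
      have hθu : θ u = 0 := le_antisymm (hz ▸ self_le_marg hθnn D u) (hθnn u)
      rw [hθu]
      refine Finset.sum_eq_zero fun v _ => ?_
      rw [hwtp (u, v), if_neg (fun hx => hPu hx.1)]
  -- column sums
  have hcol : ∀ v, (∑ u : Fin n → Bool, wt (u, v)) = lamt v := by
    intro v
    by_cases hPv : 0 < marg θ D v
    · have hstep : ∀ u : Fin n → Bool, wt (u, v)
          = (lamt v / marg θ D v) * (if (∀ j ∈ D, u j = v j) then θ u else 0) := by
        intro u
        rw [hwtp (u, v)]
        by_cases hc : ∀ j ∈ D, v j = u j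
        · have hpat : ∀ j ∈ D, u j = v j := fun j hj => (hc j hj).symm
          have hmm : marg θ D u = marg θ D v := marg_pattern hpat
          rw [if_pos ⟨by rwa [hmm], hc⟩, if_pos hpat, hmm]
          ring
        · rw [if_neg (fun hx => hc hx.2), if_neg (fun hx => hc (fun j hj => (hx j hj).symm)),
            mul_zero]
      rw [Finset.sum_congr rfl fun u _ => hstep u, ← Finset.mul_sum]
      have : (∑ u : Fin n → Bool, if (∀ j ∈ D, u j = v j) then θ u else 0)
          = marg θ D v := rfl
      rw [this]
      field_simp
    · have hz : marg θ D v = 0 := le_antisymm (not_lt.mp hPv) (marg_nonneg hθnn D v)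
      have hlz : marg lamt D v = 0 := by rw [← hmargeq]; exact hz
      have hlamv : lamt v = 0 :=
        marg_zero_forall hlnn hlz v (fun j _ => rfl)
      rw [hlamv]
      refine Finset.sum_eq_zero fun u _ => ?_
      rw [hwtp (u, v)]
      by_cases hc : (0 < marg θ D u ∧ ∀ j ∈ D, v j = u j)
      · exfalso
        have hpat : ∀ j ∈ D, u j = v j := fun j hj => (hc.2 j hj).symm
        have : marg θ D u = marg θ D v := marg_pattern hpat
        rw [this, hz] at hc
        exact lt_irrefl 0 hc.1
      · rw [if_neg hc]
  have htot : (∑ p : (Fin n → Bool) × (Fin n → Bool), wt p) = 1 := by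
    rw [Fintype.sum_prod_type]
    rw [Finset.sum_congr rfl fun u _ => hrow u]
    exact hθsum
  -- the Mo of θ' as a pair sum
  have hMoθ' : ∀ S : Finset (Fin n), Mo θ' S
      = ∑ p : (Fin n → Bool) × (Fin n → Bool),
          if (∀ j ∈ S, comb p j = true) then wt p else 0 := by
    intro S
    exact sum_if_collapse (fun w => ∀ j ∈ S, w j = true) comb wt
  refine ⟨θ', ?_, ?_, ?_, ?_⟩
  · intro w
    exact Finset.sum_nonneg fun p _ => by
      by_cases h : comb p = w
      · rw [if_pos h]; exact hwtnn p
      · rw [if_neg h]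
  · have : (∑ w : Fin n → Bool, θ' w) = ∑ w : Fin n → Bool,
        if (∀ j ∈ (∅ : Finset (Fin n)), w j = true) then θ' w else 0 := by
      refine Finset.sum_congr rfl fun w _ => ?_
      rw [if_pos (by simp)]
    rw [this]
    have h2 := hMoθ' ∅
    rw [Mo] at h2
    rw [h2]
    rw [Finset.sum_congr rfl fun p _ => if_pos (by simp : ∀ j ∈ (∅ : Finset (Fin n)),
      comb p j = true)]
    exact htot
  · -- support feasibility
    intro w hw i s hs hKi
    have hex : ∃ p : (Fin n → Bool) × (Fin n → Bool),
        (if comb p = w then wt p else 0) ≠ 0 := by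
      by_contra hc
      push_neg at hc
      exact hw (Finset.sum_eq_zero fun p _ => hc p)
    obtain ⟨p, hp⟩ := hex
    have hcombp : comb p = w := by
      by_contra hc
      rw [if_neg hc] at hp
      exact hp rfl
    rw [if_pos hcombp] at hp
    obtain ⟨hθ1, hlam2, hpat⟩ := hwtne p hp
    rcases Finset.mem_insert.mp hs with rfl | hsU
    · -- s = t
      have hrw : restr w (K i) = restr p.2 (K i) := by
        funext j
        have hjt : (j : Fin n) ∈ Q s := hKi j.2
        show w j.1 = p.2 j.1
        rw [← hcombp]
        show (if (j : Fin n) ∈ Q s then p.2 j.1 else p.1 j.1) = p.2 j.1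
        rw [if_pos hjt]
      rw [hrw]
      exact (hsupp p.2 hlam2).2 i hKi
    · -- s ∈ U
      have hrw : restr w (K i) = restr p.1 (K i) := by
        funext j
        have hjs : (j : Fin n) ∈ Q s := hKi j.2
        show w j.1 = p.1 j.1
        rw [← hcombp]
        show (if (j : Fin n) ∈ Q t then p.2 j.1 else p.1 j.1) = p.1 j.1
        by_cases hjt : (j : Fin n) ∈ Q t
        · rw [if_pos hjt]
          exact hpat j.1 (Finset.mem_inter.mpr ⟨hjt, hsep s hsU j.1 hjt hjs⟩)
        · rw [if_neg hjt]
      rw [hrw]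
      exact hθsupp p.1 hθ1 i s hsU hKi
  · -- moments
    intro s hs S hS
    rw [hMoθ' S]
    rcases Finset.mem_insert.mp hs with rfl | hsU
    · -- s = t
      have hstep : ∀ p : (Fin n → Bool) × (Fin n → Bool),
          (if (∀ j ∈ S, comb p j = true) then wt p else 0)
            = if (∀ j ∈ S, p.2 j = true) then wt p else 0 := by
        intro p
        have : (∀ j ∈ S, comb p j = true) ↔ (∀ j ∈ S, p.2 j = true) := by
          constructor
          · intro h j hj
            have := h j hj
            rwa [show comb p j = p.2 j from if_pos (hS hj)] at this
          · intro h j hj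
            rw [show comb p j = p.2 j from if_pos (hS hj)]
            exact h j hj
        by_cases hc : ∀ j ∈ S, comb p j = true
        · rw [if_pos hc, if_pos (this.mp hc)]
        · rw [if_neg hc, if_neg fun hx => hc (this.mpr hx)]
      rw [Finset.sum_congr rfl fun p _ => hstep p]
      rw [Fintype.sum_prod_type_right]
      have : ∀ v : Fin n → Bool, (∑ u : Fin n → Bool,
          if (∀ j ∈ S, v j = true) then wt (u, v) else 0)
            = if (∀ j ∈ S, v j = true) then lamt v else 0 := by
        intro v
        by_cases hc : ∀ j ∈ S, v j = true
        · rw [Finset.sum_congr rfl fun u _ => if_pos hc, hcol v, if_pos hc]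
        · rw [Finset.sum_congr rfl fun u _ => if_neg hc, if_neg hc, Finset.sum_const_zero]
      rw [Finset.sum_congr rfl fun v _ => this v]
      exact hlmo S hS
    · -- s ∈ U
      have hstep : ∀ p : (Fin n → Bool) × (Fin n → Bool),
          (if (∀ j ∈ S, comb p j = true) then wt p else 0)
            = if (∀ j ∈ S, p.1 j = true) then wt p else 0 := by
        intro p
        by_cases hwp : wt p = 0
        · by_cases h1 : ∀ j ∈ S, comb p j = true <;>
            by_cases h2 : ∀ j ∈ S, p.1 j = true <;>
              simp [h1, h2, hwp]
        · obtain ⟨-, -, hpat⟩ := hwtne p hwp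
          have : (∀ j ∈ S, comb p j = true) ↔ (∀ j ∈ S, p.1 j = true) := by
            have hcj : ∀ j ∈ S, comb p j = p.1 j := by
              intro j hj
              show (if j ∈ Q t then p.2 j else p.1 j) = p.1 j
              by_cases hjt : j ∈ Q t
              · rw [if_pos hjt]
                exact hpat j (Finset.mem_inter.mpr ⟨hjt, hsep s hsU j hjt (hS hj)⟩)
              · rw [if_neg hjt]
            constructor
            · intro h j hj
              rw [← hcj j hj]; exact h j hj
            · intro h j hj
              rw [hcj j hj]; exact h j hj
          by_cases hc : ∀ j ∈ S, comb p j = true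
          · rw [if_pos hc, if_pos (this.mp hc)]
          · rw [if_neg hc, if_neg fun hx => hc (this.mpr hx)]
      rw [Finset.sum_congr rfl fun p _ => hstep p]
      rw [Fintype.sum_prod_type]
      have : ∀ u : Fin n → Bool, (∑ v : Fin n → Bool,
          if (∀ j ∈ S, u j = true) then wt (u, v) else 0)
            = if (∀ j ∈ S, u j = true) then θ u else 0 := by
        intro u
        by_cases hc : ∀ j ∈ S, u j = true
        · rw [Finset.sum_congr rfl fun v _ => if_pos hc, hrow u, if_pos hc]
        · rw [Finset.sum_congr rfl fun v _ => if_neg hc, if_neg hc, Finset.sum_const_zero]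
      rw [Finset.sum_congr rfl fun u _ => this u]
      exact hθmo s hsU S hS

end Main

section Main2

variable {n m : ℕ} {τ : Type} {T : SimpleGraph τ}

lemma sub_insert [DecidableEq τ] {U : Finset τ} (hU : Sub T ↑U) {t t' : τ}
    (ht' : t' ∈ U) (hAdj : T.Adj t t') : Sub T ↑(insert t U : Finset τ) := by
  have hwalk : ∀ b ∈ U, ∃ w : T.Walk t b, ∀ x ∈ w.support, x ∈ (insert t U : Finset τ) := by
    intro b hb
    obtain ⟨w0, hw0⟩ := hU ht' hb
    refine ⟨SimpleGraph.Walk.cons hAdj w0, fun x hx => ?_⟩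
    rw [SimpleGraph.Walk.support_cons, List.mem_cons] at hx
    rcases hx with rfl | hx
    · exact Finset.mem_insert_self _ _
    · exact Finset.mem_insert_of_mem (hw0 x hx)
  intro a b ha hb
  simp only [Finset.coe_insert, Set.mem_insert_iff, Finset.mem_coe] at ha hb
  rcases ha with rfl | ha <;> rcases hb with rfl | hb
  · exact ⟨SimpleGraph.Walk.nil, by simp⟩
  · obtain ⟨w, hw⟩ := hwalk b hb
    exact ⟨w, fun x hx => by simpa using hw x hx⟩
  · obtain ⟨w, hw⟩ := hwalk a ha
    refine ⟨w.reverse, fun x hx => ?_⟩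
    rw [SimpleGraph.Walk.support_reverse, List.mem_reverse] at hx
    simpa using hw x hx
  · obtain ⟨w, hw⟩ := hU ha hb
    exact ⟨w, fun x hx => by simp [hw x hx]⟩

lemma separator (hT : T.IsAcyclic) {Q : τ → Finset (Fin n)}
    (bagsSub : ∀ j : Fin n, Sub T {s : τ | j ∈ Q s})
    {U : Finset τ} (hUsub : Sub T ↑U) {t t' : τ} (htU : t ∉ U) (ht'U : t' ∈ U)
    (hAdj : T.Adj t t') :
    ∀ s ∈ U, ∀ j : Fin n, j ∈ Q t → j ∈ Q s → j ∈ Q t' := by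
  classical
  intro s hs j hjt hjs
  obtain ⟨wA, hwA⟩ := bagsSub j hjt hjs
  have hp : (wA.toPath : T.Walk t s).IsPath := wA.toPath.2
  have hpA : ∀ x ∈ (wA.toPath : T.Walk t s).support, j ∈ Q x := fun x hx =>
    hwA x (SimpleGraph.Walk.support_bypass_subset wA hx)
  obtain ⟨wU, hwU⟩ := hUsub ht'U (Finset.mem_coe.mpr hs)
  have hpsub : (wA.toPath : T.Walk t s).support ⊆
      (SimpleGraph.Walk.cons hAdj wU).support :=
    path_subset_walk hT hp
  rcases hq : (wA.toPath : T.Walk t s) with _ | ⟨hadj2, q⟩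
  · exact absurd hs htU
  · rename_i x
    have hxp : x ∈ (wA.toPath : T.Walk t s).support := by
      rw [hq]
      rw [SimpleGraph.Walk.support_cons]
      exact List.mem_cons_of_mem _ (SimpleGraph.Walk.start_mem_support q)
    have hxt : x ≠ t := by
      intro hc
      subst hc
      have := hp.support_nodup
      rw [hq, SimpleGraph.Walk.support_cons] at this
      exact (List.nodup_cons.mp this).1 (SimpleGraph.Walk.start_mem_support q)
    have hxU : x ∈ U := by
      have := hpsub hxp
      rw [SimpleGraph.Walk.support_cons, List.mem_cons] at this
      rcases this with hc | hc
      · exact absurd hc hxt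
      · exact Finset.mem_coe.mp (hwU x hc)
    have hxt' : x = t' := neighbor_unique hT hUsub (fun hc => htU (Finset.mem_coe.mp hc))
      (Finset.mem_coe.mpr ht'U) (Finset.mem_coe.mpr hxU) hAdj hadj2
    subst hxt'
    exact hpA x hxp

lemma grow [Fintype τ] [DecidableEq τ] (htree : T.IsTree)
    (K : Fin m → Finset (Fin n)) (Sc : ∀ i : Fin m, Set ({j // j ∈ K i} → Bool))
    (Q : τ → Finset (Fin n)) (Z : Finset (Fin n) → ℝ)
    (lam : τ → (Fin n → Bool) → ℝ) (hfeas : LPzFeas K Sc T Q Z lam)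
    (bagsSub : ∀ j : Fin n, Sub T {s : τ | j ∈ Q s}) :
    ∀ (k : ℕ) (U : Finset τ), U.Nonempty → Sub T ↑U →
      (∃ θ, GoodDist K Sc Q Z U θ) → U.card + k = Fintype.card τ →
      ∃ θ, GoodDist K Sc Q Z (Finset.univ : Finset τ) θ := by
  obtain ⟨hlam0, hlnn, hlsum, hlmom⟩ := hfeas
  have hlmo : ∀ (t : τ) (S : Finset (Fin n)), S ⊆ Q t → Z S = Mo (lam t) S := by
    intro t S hS
    rw [hlmom t S hS, Finset.sum_filter]
    rfl
  intro k
  induction k with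
  | zero =>
    intro U _ _ hθ hcard
    rw [← Finset.eq_univ_of_card U (by omega)]
    exact hθ
  | succ k ih =>
    intro U hUne hUsub hθ hcard
    obtain ⟨θ, hθ⟩ := hθ
    have hUne' : U ≠ Finset.univ := by
      intro hc
      rw [hc, Finset.card_univ] at hcard
      omega
    have hex : ∃ x : τ, x ∉ U := by
      by_contra hc
      push_neg at hc
      exact hUne' (Finset.eq_univ_iff_forall.mpr hc)
    obtain ⟨x, hx⟩ := hex
    obtain ⟨u, hu⟩ := hUne
    obtain ⟨w⟩ := htree.isConnected.preconnected u x
    obtain ⟨t', ht'U, t, htU, hadj⟩ :=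
      exists_exit (U := (↑U : Set τ)) w (Finset.mem_coe.mpr hu) (fun hc => hx hc)
    have htU' : t ∉ U := fun hc => htU (Finset.mem_coe.mpr hc)
    have ht'U' : t' ∈ U := Finset.mem_coe.mp ht'U
    have hsep := separator htree.IsAcyclic bagsSub hUsub htU' ht'U' hadj.symm
    obtain ⟨θ', hθ'⟩ := merge K Sc Q Z hθ ht'U' hsep (lam t)
      (fun v hv => by
        by_contra hc
        exact hv (hlam0 t v hc))
      (hlnn t) (hlsum t) (hlmo t)
    refine ih (insert t U) ⟨t, Finset.mem_insert_self _ _⟩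
      (sub_insert hUsub ht'U' hadj.symm) ⟨θ', hθ'⟩ ?_
    rw [Finset.card_insert_of_notMem htU']
    omega

lemma clique_in_bag [Fintype τ] (htree : T.IsTree)
    (K : Fin m → Finset (Fin n)) (Q : τ → Finset (Fin n))
    (bagsSub : ∀ j : Fin n, Sub T {s : τ | j ∈ Q s})
    (bagsNe : ∀ j : Fin n, ({s : τ | j ∈ Q s}).Nonempty)
    (hedge : ∀ u v : Fin n, u ≠ v → (∃ i, u ∈ K i ∧ v ∈ K i) → ∃ s, u ∈ Q s ∧ v ∈ Q s)
    (i : Fin m) : ∃ s : τ, K i ⊆ Q s := by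
  classical
  haveI : Nonempty τ := htree.isConnected.nonempty
  set l : List (Set τ) := (K i).toList.map (fun v => {s : τ | v ∈ Q s}) with hl
  have h1 : ∀ A ∈ l, PCl T A := by
    intro A hA
    rw [hl, List.mem_map] at hA
    obtain ⟨v, _, rfl⟩ := hA
    exact ⟨bagsNe v, bagsSub v⟩
  have h2 : ∀ A ∈ l, ∀ B ∈ l, (A ∩ B).Nonempty := by
    intro A hA B hB
    rw [hl, List.mem_map] at hA hB
    obtain ⟨u, hu, rfl⟩ := hA
    obtain ⟨v, hv, rfl⟩ := hB
    by_cases huv : u = v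
    · subst huv
      rw [Set.inter_self]
      exact bagsNe u
    · obtain ⟨s, hs1, hs2⟩ := hedge u v huv
        ⟨i, Finset.mem_toList.mp hu, Finset.mem_toList.mp hv⟩
      exact ⟨s, hs1, hs2⟩
  obtain ⟨s, hsmem⟩ := helly_list_aux htree.IsAcyclic l.length l le_rfl h1 h2
  refine ⟨s, fun j hj => ?_⟩
  have : {x : τ | j ∈ Q x} ∈ l := by
    rw [hl, List.mem_map]
    exact ⟨j, Finset.mem_toList.mpr hj, rfl⟩
  exact mem_foldr_inter.mp hsmem _ this

end Main2

end LPZAux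

/-- Lemma 8: decomposition of feasible solutions of LPz. Any feasible
solution `(Z, lam)` of LPz is, on every bag, a convex combination of the 0/1 "moment vectors"
of GB-feasible points. -/
theorem lpz_decomposition
    {n m : ℕ} {τ : Type} [Fintype τ] (K : Fin m → Finset (Fin n))
    (Sc : ∀ i : Fin m, Set ({j // j ∈ K i} → Bool))
    (T : SimpleGraph τ) (Q : τ → Finset (Fin n))
    (hTD : IsTreeDecomp (interGraph K) T Q)
    (Z : Finset (Fin n) → ℝ) (lam : τ → (Fin n → Bool) → ℝ)
    (hfeas : LPzFeas K Sc T Q Z lam) :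
    ∃ (k : ℕ) (θ : Fin k → ℝ) (y : Fin k → Fin n → Bool),
      1 ≤ k ∧
      (∀ i, 0 ≤ θ i) ∧
      (∑ i, θ i) = 1 ∧
      (∀ i, GBFeas K Sc (y i)) ∧
      (∀ t, ∀ S : Finset (Fin n), S ⊆ Q t →
        Z S = ∑ i ∈ Finset.univ.filter (fun i : Fin k => ∀ j ∈ S, y i j = true), θ i) := by
  classical
  obtain ⟨htree, hbags, hedges⟩ := hTD
  haveI : Nonempty τ := htree.isConnected.nonempty
  have bagsSub : ∀ j : Fin n, LPZAux.Sub T {s : τ | j ∈ Q s} :=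
    fun j => LPZAux.sub_of_induce_connected (hbags j)
  have bagsNe : ∀ j : Fin n, ({s : τ | j ∈ Q s}).Nonempty :=
    fun j => LPZAux.nonempty_of_induce_connected (hbags j)
  have hclique : ∀ i, ∃ s, K i ⊆ Q s :=
    LPZAux.clique_in_bag htree K Q bagsSub bagsNe
      (fun u v huv hex => hedges u v ⟨huv, hex⟩)
  have hf := hfeas
  obtain ⟨hlam0, hlnn, hlsum, hlmom⟩ := hf
  have hlmo : ∀ (t : τ) (S : Finset (Fin n)), S ⊆ Q t → Z S = LPZAux.Mo (lam t) S := by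
    intro t S hS
    rw [hlmom t S hS, Finset.sum_filter]
    rfl
  set t₀ : τ := Classical.arbitrary τ with ht₀
  have hbase : LPZAux.GoodDist K Sc Q Z {t₀} (lam t₀) := by
    refine ⟨hlnn t₀, hlsum t₀, ?_, ?_⟩
    · intro v hv i t ht hKi
      rw [Finset.mem_singleton] at ht
      have hvF : v ∈ Ffeas K Sc Q t := by
        by_contra hc
        exact hv (ht ▸ hlam0 t v hc)
      exact hvF.2 i hKi
    · intro t ht S hS
      rw [Finset.mem_singleton] at ht
      exact ht ▸ hlmo t S hS
  have hsub0 : LPZAux.Sub T ↑({t₀} : Finset τ) := by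
    intro a b ha hb
    simp only [Finset.coe_singleton, Set.mem_singleton_iff] at ha hb
    subst ha; subst hb
    exact ⟨SimpleGraph.Walk.nil, by simp⟩
  have hcard1 : ({t₀} : Finset τ).card + (Fintype.card τ - 1) = Fintype.card τ := by
    have : 1 ≤ Fintype.card τ := Fintype.card_pos
    rw [Finset.card_singleton]
    omega
  obtain ⟨θ, hθnn, hθsum, hθsupp, hθmo⟩ :=
    LPZAux.grow htree K Sc Q Z lam hfeas bagsSub (Fintype.card τ - 1) {t₀}
      (Finset.singleton_nonempty t₀) hsub0 ⟨lam t₀, hbase⟩ hcard1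
  -- package as a finite convex combination
  have hcard : Fintype.card (Fin n → Bool) = 2 ^ n := by simp [Fintype.card_fun]
  set e : (Fin n → Bool) ≃ Fin (2 ^ n) := Fintype.equivFinOfCardEq hcard with he
  have hv₀ : ∃ v : Fin n → Bool, θ v ≠ 0 := by
    by_contra hc
    push_neg at hc
    rw [Finset.sum_congr rfl (fun v _ => hc v), Finset.sum_const_zero] at hθsum
    exact zero_ne_one hθsum
  obtain ⟨v₀, hv₀⟩ := hv₀
  have hfeasnz : ∀ v : Fin n → Bool, θ v ≠ 0 → GBFeas K Sc v := by
    intro v hv i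
    obtain ⟨s, hKs⟩ := hclique i
    exact hθsupp v hv i s (Finset.mem_univ s) hKs
  refine ⟨2 ^ n, fun i => θ (e.symm i),
    fun i => if θ (e.symm i) = 0 then v₀ else e.symm i,
    Nat.one_le_two_pow, fun i => hθnn _, ?_, ?_, ?_⟩
  · exact (Equiv.sum_comp e.symm θ).trans hθsum
  · intro i
    by_cases hz : θ (e.symm i) = 0
    · simp only [if_pos hz]
      exact hfeasnz v₀ hv₀
    · simp only [if_neg hz]
      exact hfeasnz _ hz
  · intro t S hS
    rw [hθmo t (Finset.mem_univ t) S hS, Finset.sum_filter]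
    rw [show LPZAux.Mo θ S = ∑ i : Fin (2 ^ n),
        if (∀ j ∈ S, (e.symm i) j = true) then θ (e.symm i) else 0 from
      (Equiv.sum_comp e.symm (fun v => if (∀ j ∈ S, v j = true) then θ v else 0)).symm]
    refine Finset.sum_congr rfl fun i _ => ?_
    by_cases hz : θ (e.symm i) = 0
    · simp only [hz, ite_self]
    · simp only [if_neg hz]
end

section
/- Let (T, Q) be a tree-decomposition of the intersection graph of an instance of problem GB, and let x̂ ∈ {0,1}^n be GB-feasible. Define λ̂^t_v = 1 if v is the restriction of x̂ to Q_t and λ̂^t_v = 0 for all other v ∈ F_t, and define Ẑ_S = 1 if x̂_j = 1 for all j ∈ S and Ẑ_S = 0 otherwise (for each S contained in some Q_t). Then (Ẑ, λ̂) is a feasible solution of LPz, and for every cost vector c ∈ ℝ^n, Σ_{j=1}^n c_j Ẑ_{{j}} = Σ_{j=1}^n c_j x̂_j. -/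
open Finset

section

variable {n m : ℕ} {K : Fin m → Finset (Fin n)} {Sc : ∀ i : Fin m, Set ({j // j ∈ K i} → Bool)}

def maskTo (A : Finset (Fin n)) (x : Fin n → Bool) : Fin n → Bool :=
  fun j => if j ∈ A then x j else false

theorem restr_maskTo_of_subset {A B : Finset (Fin n)} (x : Fin n → Bool) (h : B ⊆ A) :
    restr (maskTo A x) B = restr x B := by
  funext j
  simp [restr, maskTo, h j.2]

theorem maskTo_mem_Ffeas {τ : Type} (Q : τ → Finset (Fin n)) (t : τ) {x : Fin n → Bool}
    (hx : GBFeas K Sc x) : maskTo (Q t) x ∈ Ffeas K Sc Q t :=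
  ⟨fun _ hj => if_neg hj, fun i hK => restr_maskTo_of_subset x hK ▸ hx i⟩

theorem forall_maskTo_iff_of_subset {A S : Finset (Fin n)} (x : Fin n → Bool) (h : S ⊆ A) :
    (∀ j ∈ S, maskTo A x j = true) ↔ ∀ j ∈ S, x j = true :=
  forall₂_congr fun j hj => by rw [maskTo, if_pos (h hj)]

theorem sum_filter_indicator_eq {α β : Type*} [Fintype α] [DecidableEq α] (p : α → Prop)
    [DecidablePred p] (a : α) [AddCommMonoidWithOne β] :
    ∑ v ∈ univ.filter p, (if v = a then (1 : β) else 0) = if p a then 1 else 0 := by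
  simp [sum_ite_eq']

theorem sum_mul_indicator_singleton_eq {x : Fin n → Bool} (c : Fin n → ℝ) :
    ∑ j, c j * (if ∀ j' ∈ ({j} : Finset (Fin n)), x j' = true then (1 : ℝ) else 0) =
      ∑ j, c j * bval (x j) :=
  sum_congr rfl fun j _ => by simp [bval]

end

theorem lpz_relaxation_general
    {n m : ℕ} {τ : Type} (K : Fin m → Finset (Fin n))
    (Sc : ∀ i : Fin m, Set ({j // j ∈ K i} → Bool))
    (T : SimpleGraph τ) (Q : τ → Finset (Fin n))
    (xh : Fin n → Bool) (hx : GBFeas K Sc xh) :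
    LPzFeas K Sc T Q
      (fun S : Finset (Fin n) => if ∀ j ∈ S, xh j = true then (1 : ℝ) else 0)
      (fun t v => if v = (fun j => if j ∈ Q t then xh j else false) then (1 : ℝ) else 0) ∧
    ∀ c : Fin n → ℝ,
      (∑ j, c j * (if ∀ j' ∈ ({j} : Finset (Fin n)), xh j' = true then (1 : ℝ) else 0)) =
        ∑ j, c j * bval (xh j) := by
  change LPzFeas K Sc T Q _ (fun t v => if v = maskTo (Q t) xh then (1 : ℝ) else 0) ∧ _
  refine ⟨⟨fun t v hv => ?_, fun t v => ?_, fun t => by simp, fun t S hS => ?_⟩,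
    sum_mul_indicator_singleton_eq⟩
  · exact if_neg fun (h : v = _) => hv (h ▸ maskTo_mem_Ffeas Q t hx)
  · dsimp only
    split <;> norm_num
  · simp only [sum_filter_indicator_eq, forall_maskTo_iff_of_subset xh hS]

/-- LPz is a relaxation of GB. A GB-feasible 0/1 vector `xh` yields a feasible
solution `(Zhat, lamhat)` of LPz with the same objective value for every cost vector. -/
theorem lpz_relaxation
    {n m : ℕ} {τ : Type} [Fintype τ] (K : Fin m → Finset (Fin n))
    (Sc : ∀ i : Fin m, Set ({j // j ∈ K i} → Bool))
    (T : SimpleGraph τ) (Q : τ → Finset (Fin n))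
    (hTD : IsTreeDecomp (interGraph K) T Q)
    (xh : Fin n → Bool) (hx : GBFeas K Sc xh) :
    LPzFeas K Sc T Q
      (fun S : Finset (Fin n) => if ∀ j ∈ S, xh j = true then (1 : ℝ) else 0)
      (fun t v => if v = (fun j => if j ∈ Q t then xh j else false) then (1 : ℝ) else 0) ∧
    ∀ c : Fin n → ℝ,
      (∑ j, c j * (if ∀ j' ∈ ({j} : Finset (Fin n)), xh j' = true then (1 : ℝ) else 0)) =
        ∑ j, c j * bval (xh j) :=
  lpz_relaxation_general K Sc T Q xh hx
end

section
/- Let (T, Q) be a tree-decomposition of the intersection graph of an instance of problem GB, and let x̃ ∈ {0,1}^n be GB-feasible. Define X̃[Y, N] = Π_{j∈Y} x̃_j · Π_{j∈N} (1 − x̃_j) for every pair (Y, N) belonging to some Ω_t, and define λ̃^t_v = 1 if v is the restriction of x̃ to Q_t and λ̃^t_v = 0 for all other v ∈ F_t. Then (X̃, λ̃) is a feasible, 0/1-valued solution of LP-GB, and for every cost vector c ∈ ℝ^n, Σ_{j=1}^n c_j X̃[{j}, ∅] = Σ_{j=1}^n c_j x̃_j. -/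
open Finset

/-- The paper's `X̃[Y, N]`, built from the 0/1 vector `x`. -/
def literalProd {n : ℕ} (x : Fin n → Bool) (YN : Finset (Fin n) × Finset (Fin n)) : ℝ :=
  (∏ j ∈ YN.1, bval (x j)) * ∏ j ∈ YN.2, (1 - bval (x j))

theorem bval_eq_zero_or_one (b : Bool) : bval b = 0 ∨ bval b = 1 := by
  cases b <;> simp [bval]

theorem Finset.prod_eq_zero_or_one {ι M : Type*} [CommMonoidWithZero M] (s : Finset ι)
    (f : ι → M) (hf : ∀ i ∈ s, f i = 0 ∨ f i = 1) : ∏ i ∈ s, f i = 0 ∨ ∏ i ∈ s, f i = 1 := by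
  refine Finset.prod_induction f (fun a => a = 0 ∨ a = 1) ?_ (Or.inr rfl) hf
  rintro a b (rfl | rfl) (rfl | rfl) <;> simp

theorem literalProd_eq_zero_or_one {n : ℕ} (x : Fin n → Bool)
    (YN : Finset (Fin n) × Finset (Fin n)) : literalProd x YN = 0 ∨ literalProd x YN = 1 := by
  have hY := Finset.prod_eq_zero_or_one YN.1 _ fun j _ => bval_eq_zero_or_one (x j)
  have hN := Finset.prod_eq_zero_or_one YN.2 (fun j => 1 - bval (x j)) fun j _ => by
    rcases bval_eq_zero_or_one (x j) with h | h <;> simp [h]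
  rcases hY with hY | hY <;> rcases hN with hN | hN <;> simp [literalProd, hY, hN]

theorem literalProd_congr {n : ℕ} {x y : Fin n → Bool} {YN : Finset (Fin n) × Finset (Fin n)}
    (h : ∀ j ∈ YN.1 ∪ YN.2, x j = y j) : literalProd x YN = literalProd y YN := by
  unfold literalProd
  congr 1 <;> refine Finset.prod_congr rfl fun j hj => ?_ <;> simp [h j (by simp [hj])]

theorem literalProd_singleton_empty {n : ℕ} (x : Fin n → Bool) (j : Fin n) :
    literalProd x ({j}, ∅) = bval (x j) := by
  simp [literalProd]

theorem restr_ite_of_subset {n : ℕ} (x : Fin n → Bool) {A B : Finset (Fin n)} (hBA : B ⊆ A) :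
    restr (fun j => if j ∈ A then x j else false) B = restr x B := by
  funext j
  simp [restr, hBA j.2]

theorem mem_Ffeas_of_GBFeas {n m : ℕ} {τ : Type} {K : Fin m → Finset (Fin n)}
    {Sc : ∀ i : Fin m, Set ({j // j ∈ K i} → Bool)} {x : Fin n → Bool} (hx : GBFeas K Sc x)
    (Q : τ → Finset (Fin n)) (t : τ) :
    (fun j => if j ∈ Q t then x j else false) ∈ Ffeas K Sc Q t := by
  refine ⟨fun j hj => by simp [hj], fun i hKi => ?_⟩
  rw [restr_ite_of_subset x hKi]
  exact hx i

theorem LPGBFeas_pointMass {n m : ℕ} {τ : Type} {K : Fin m → Finset (Fin n)}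
    {Sc : ∀ i : Fin m, Set ({j // j ∈ K i} → Bool)} {T : SimpleGraph τ} {Q : τ → Finset (Fin n)}
    {X : Finset (Fin n) × Finset (Fin n) → ℝ} (w : τ → Fin n → Bool)
    (hw : ∀ t, w t ∈ Ffeas K Sc Q t)
    (hX : ∀ t, ∀ YN ∈ Omega T Q t, X YN = literalProd (w t) YN) :
    LPGBFeas K Sc T Q X (fun t v => if v = w t then 1 else 0) := by
  refine ⟨fun t v hv => if_neg fun (h : v = w t) => hv (h ▸ hw t), fun t v => ?_, fun t => by simp,
    fun t YN hYN => ?_⟩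
  · dsimp only
    split_ifs <;> simp
  simp only [ite_mul, one_mul, zero_mul, Finset.sum_ite_eq', Finset.mem_univ, if_true]
  exact hX t YN hYN

theorem lpgb_relaxation_general
    {n m : ℕ} {τ : Type} (K : Fin m → Finset (Fin n))
    (Sc : ∀ i : Fin m, Set ({j // j ∈ K i} → Bool))
    (T : SimpleGraph τ) (Q : τ → Finset (Fin n))
    (xt : Fin n → Bool) (hx : GBFeas K Sc xt) :
    LPGBFeas K Sc T Q
      (fun YN : Finset (Fin n) × Finset (Fin n) =>
        (∏ j ∈ YN.1, bval (xt j)) * ∏ j ∈ YN.2, (1 - bval (xt j)))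
      (fun t v => if v = (fun j => if j ∈ Q t then xt j else false) then (1 : ℝ) else 0) ∧
    (∀ t, ∀ YN ∈ Omega T Q t,
      ((∏ j ∈ YN.1, bval (xt j)) * ∏ j ∈ YN.2, (1 - bval (xt j))) = 0 ∨
      ((∏ j ∈ YN.1, bval (xt j)) * ∏ j ∈ YN.2, (1 - bval (xt j))) = 1) ∧
    (∀ (t : τ) (v : Fin n → Bool),
      (if v = (fun j => if j ∈ Q t then xt j else false) then (1 : ℝ) else 0) = 0 ∨
      (if v = (fun j => if j ∈ Q t then xt j else false) then (1 : ℝ) else 0) = 1) ∧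
    ∀ c : Fin n → ℝ,
      (∑ j, c j * ((∏ j' ∈ ({j} : Finset (Fin n)), bval (xt j')) *
          ∏ j' ∈ (∅ : Finset (Fin n)), (1 - bval (xt j')))) =
        ∑ j, c j * bval (xt j) := by
  have hX : ∀ t, ∀ YN ∈ Omega T Q t,
      literalProd xt YN = literalProd (fun j => if j ∈ Q t then xt j else false) YN :=
    fun t YN hYN => literalProd_congr fun j hj => by simp [hYN.2.1 hj]
  exact ⟨LPGBFeas_pointMass _ (mem_Ffeas_of_GBFeas hx Q) hX,
    fun _ YN _ => literalProd_eq_zero_or_one xt YN,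
    fun _ _ => by split_ifs <;> simp,
    fun c => Finset.sum_congr rfl fun j _ => congrArg (c j * ·) (literalProd_singleton_empty xt j)⟩

/-- Lemma: LP-GB is a relaxation of GB, in a strong sense. A GB-feasible 0/1
vector `xt` yields a feasible 0/1-valued solution `(Xt, lamt)` of LP-GB with the same objective
value for every cost vector. -/
theorem lpgb_relaxation
    {n m : ℕ} {τ : Type} [Fintype τ] (K : Fin m → Finset (Fin n))
    (Sc : ∀ i : Fin m, Set ({j // j ∈ K i} → Bool))
    (T : SimpleGraph τ) (Q : τ → Finset (Fin n))
    (hTD : IsTreeDecomp (interGraph K) T Q)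
    (xt : Fin n → Bool) (hx : GBFeas K Sc xt) :
    LPGBFeas K Sc T Q
      (fun YN : Finset (Fin n) × Finset (Fin n) =>
        (∏ j ∈ YN.1, bval (xt j)) * ∏ j ∈ YN.2, (1 - bval (xt j)))
      (fun t v => if v = (fun j => if j ∈ Q t then xt j else false) then (1 : ℝ) else 0) ∧
    (∀ t, ∀ YN ∈ Omega T Q t,
      ((∏ j ∈ YN.1, bval (xt j)) * ∏ j ∈ YN.2, (1 - bval (xt j))) = 0 ∨
      ((∏ j ∈ YN.1, bval (xt j)) * ∏ j ∈ YN.2, (1 - bval (xt j))) = 1) ∧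
    (∀ (t : τ) (v : Fin n → Bool),
      (if v = (fun j => if j ∈ Q t then xt j else false) then (1 : ℝ) else 0) = 0 ∨
      (if v = (fun j => if j ∈ Q t then xt j else false) then (1 : ℝ) else 0) = 1) ∧
    ∀ c : Fin n → ℝ,
      (∑ j, c j * ((∏ j' ∈ ({j} : Finset (Fin n)), bval (xt j')) *
          ∏ j' ∈ (∅ : Finset (Fin n)), (1 - bval (xt j')))) =
        ∑ j, c j * bval (xt j) :=
  lpgb_relaxation_general K Sc T Q xt hx
end

section
/- Let G be a finite simple graph admitting a tree-decomposition of width Z. Then there exist a finite simple graph Ḡ in which every vertex has degree at most 3, and a surjective map φ : V(Ḡ) → V(G) such that: (i) for every u ∈ V(G), the fiber φ^{-1}(u) induces a connected acyclic subgraph (a tree) of Ḡ; (ii) every edge of Ḡ joining two distinct fibers φ^{-1}(u), φ^{-1}(v) satisfies that {u, v} is an edge of G, and for every edge {u, v} of G there is exactly one edge of Ḡ joining φ^{-1}(u) and φ^{-1}(v); and (iii) Ḡ admits a tree-decomposition of width at most 2Z + 1. -/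
open SimpleGraph

theorem exists_edge_bag_assignment {V τ : Type*} [Nonempty τ] {G : SimpleGraph V}
    {Q : τ → Finset V} (hG : ∀ u v, G.Adj u v → ∃ t, u ∈ Q t ∧ v ∈ Q t) :
    ∃ κ : Sym2 V → τ, ∀ u v, G.Adj u v → u ∈ Q (κ s(u, v)) ∧ v ∈ Q (κ s(u, v)) := by
  classical
  refine ⟨fun e => if h : ∃ t, ∀ u ∈ e, u ∈ Q t then h.choose else Classical.arbitrary τ,
    fun u v huv => ?_⟩
  obtain ⟨t, hu, hv⟩ := hG u v huv
  have h : ∃ t, ∀ w ∈ s(u, v), w ∈ Q t := ⟨t, by simp [hu, hv]⟩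
  simp only [dif_pos h]
  exact ⟨h.choose_spec u (Sym2.mem_mk_left u v), h.choose_spec v (Sym2.mem_mk_right u v)⟩

namespace SimpleGraph

variable {α : Type*}

theorem connected_induce_of_forall_eq_or_adj {H : SimpleGraph α} {Y : Set α} {c : α} (hc : c ∈ Y)
    (h : ∀ y ∈ Y, y = c ∨ H.Adj c y) : (H.induce Y).Connected := by
  refine (connected_iff_exists_forall_reachable _).2 ⟨⟨c, hc⟩, fun ⟨y, hy⟩ => ?_⟩
  rcases h y hy with rfl | hadj
  exacts [Reachable.rfl, Adj.reachable (G := H.induce Y) hadj]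

/-- The forest in which `p a` is the parent of `a`; its roots are the fixed points of `p`. -/
def parentGraph (p : α → α) : SimpleGraph α :=
  fromRel fun a b => p a = b

theorem parentGraph_adj {p : α → α} {a b : α} :
    (parentGraph p).Adj a b ↔ a ≠ b ∧ (p a = b ∨ p b = a) :=
  fromRel_adj _ a b

theorem isAcyclic_parentGraph {β : Type*} [LinearOrder β] {p : α → α} (rank : α → β)
    (hrank : ∀ a, p a ≠ a → rank (p a) < rank a) : (parentGraph p).IsAcyclic := by
  classical
  intro v c hc
  obtain ⟨m, hm, hmax⟩ := c.support.toFinset.exists_max_image rank ⟨v, by simp⟩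
  rw [List.mem_toFinset] at hm
  set c' := c.rotate m hm
  have hc' : c'.IsCycle := hc.rotate hm
  -- `m` has maximal rank on the cycle, so each of its two cycle neighbours must be its parent
  have toParent : ∀ x ∈ c'.support, (parentGraph p).Adj m x → p m = x := by
    intro x hx hadj
    refine (parentGraph_adj.1 hadj).2.resolve_right fun hxm => ?_
    have hx' : x ∈ c.support.toFinset := by simpa [c'] using hx
    exact (hmax x hx').not_gt (hxm ▸ hrank x (hxm ▸ hadj.ne))
  exact hc'.snd_ne_penultimate <|
    (toParent _ (c'.getVert_mem_support 1) (c'.adj_snd hc'.not_nil)).symm.trans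
      (toParent _ (c'.getVert_mem_support _) (c'.adj_penultimate hc'.not_nil).symm)

theorem ncard_neighborSet_parentGraph_le [Finite α] (p : α → α) (a : α) :
    ((parentGraph p).neighborSet a).ncard ≤ {b | b ≠ a ∧ p b = a}.ncard + 1 := by
  have hsub : (parentGraph p).neighborSet a ⊆ insert (p a) {b | b ≠ a ∧ p b = a} := by
    intro b hb
    obtain ⟨hne, h | h⟩ := parentGraph_adj.1 hb
    · exact Or.inl h.symm
    · exact Or.inr ⟨hne.symm, h⟩
  exact (Set.ncard_le_ncard hsub).trans (Set.ncard_insert_le _ _)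

theorem Walk.not_nil_of_penultimate_ne {G : SimpleGraph α} {u v : α} {p : G.Walk u v}
    (h : p.penultimate ≠ v) : ¬ p.Nil := by
  cases p
  · exact absurd rfl h
  · exact Walk.not_nil_cons

/-- Rooting a tree: the parent of `a` is the penultimate vertex of a shortest path from a root. -/
theorem IsTree.exists_eq_parentGraph {τ : Type*} {T : SimpleGraph τ} (hT : T.IsTree) :
    ∃ (p : τ → τ) (rank : τ → ℕ), T = parentGraph p ∧ ∀ a, p a ≠ a → rank (p a) < rank a := by
  obtain ⟨r⟩ := hT.connected.nonempty
  choose γ hγ hlen using hT.connected.exists_path_of_dist r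
  refine ⟨fun a => (γ a).penultimate, T.dist r, ?_, fun a ha => ?_⟩
  · ext a b
    rw [parentGraph_adj]
    constructor
    · intro hab
      refine ⟨hab.ne, ?_⟩
      by_cases hb : b ∈ (γ a).support
      · exact Or.inl (hT.isAcyclic.eq_penultimate_of_adj_end (hγ a) hab hb).symm
      · have ha := hT.isAcyclic.mem_support_of_ne_mem_support_of_adj_of_isPath (hγ b) (hγ a)
          hab.symm hb
        exact Or.inr (hT.isAcyclic.eq_penultimate_of_adj_end (hγ b) hab.symm ha).symm
    · rintro ⟨hne, rfl | rfl⟩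
      · exact (Walk.adj_penultimate (Walk.not_nil_of_penultimate_ne hne.symm)).symm
      · exact Walk.adj_penultimate (Walk.not_nil_of_penultimate_ne hne)
  · have hnil := Walk.not_nil_of_penultimate_ne ha
    calc T.dist r (γ a).penultimate ≤ (γ a).dropLast.length := dist_le _
      _ < (γ a).length := by
        have := Walk.not_nil_iff_lt_length.1 hnil
        rw [Walk.length_dropLast]
        omega
      _ = T.dist r a := hlen a

section ChainTree

variable {τ : Type*} [DecidableEq τ] {N : ℕ} (par : τ → τ) (port : τ → Fin N)

/-- Every `t : τ` becomes the path `(t, 0), …, (t, N - 1)`, and `(t, 0)` is attached to position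
`port t` of the path of `par t`. -/
def chainParent (x : τ × Fin N) : τ × Fin N :=
  if h : x.2.val = 0 then (if par x.1 = x.1 then x else (par x.1, port x.1))
  else (x.1, ⟨x.2.val - 1, by omega⟩)

theorem chainParent_of_ne_zero {t : τ} {k : Fin N} (hk : k.val ≠ 0) :
    chainParent par port (t, k) = (t, ⟨k.val - 1, by omega⟩) :=
  dif_neg hk

theorem chainParent_of_eq_zero {t : τ} {k : Fin N} (hk : k.val = 0) (ht : par t ≠ t) :
    chainParent par port (t, k) = (par t, port t) := by
  simp [chainParent, hk, ht]

theorem isAcyclic_chainTree (rank : τ → ℕ) (hrank : ∀ a, par a ≠ a → rank (par a) < rank a) :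
    (parentGraph (chainParent par port)).IsAcyclic := by
  refine isAcyclic_parentGraph (fun x => toLex (rank x.1, x.2)) fun ⟨t, k⟩ hx => ?_
  rw [Prod.Lex.toLex_lt_toLex]
  by_cases hk : k.val = 0
  · have ht : par t ≠ t := fun ht => hx (by simp [chainParent, hk, ht])
    exact Or.inl (by rw [chainParent_of_eq_zero par port hk ht]; exact hrank t ht)
  · rw [chainParent_of_ne_zero par port hk]
    exact Or.inr ⟨rfl, Fin.lt_def.2 (by simp only; omega)⟩

theorem chainParent_children_subset (x : τ × Fin N) :
    {y | y ≠ x ∧ chainParent par port y = x} ⊆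
      {y | y.1 = x.1 ∧ y.2.val = x.2.val + 1} ∪ {y | y.2.val = 0 ∧ port y.1 = x.2} := by
  rintro ⟨t, k⟩ ⟨hne, rfl⟩
  by_cases hk : k.val = 0
  · have ht : par t ≠ t := fun ht => hne (by simp [chainParent, hk, ht])
    right
    simp [chainParent_of_eq_zero par port hk ht, hk]
  · left
    simp only [chainParent_of_ne_zero par port hk, Set.mem_ofPred_eq, true_and]
    omega

theorem ncard_neighborSet_chainTree_le_add [Finite τ] (x : τ × Fin N) :
    ((parentGraph (chainParent par port)).neighborSet x).ncard ≤
      {y : τ × Fin N | y.2.val = 0 ∧ port y.1 = x.2}.ncard + 2 := by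
  have hsucc : {y : τ × Fin N | y.1 = x.1 ∧ y.2.val = x.2.val + 1}.ncard ≤ 1 :=
    (Set.ncard_le_one_iff).2 fun ⟨ha₁, ha₂⟩ ⟨hb₁, hb₂⟩ =>
      Prod.ext (ha₁.trans hb₁.symm) (Fin.ext (by omega))
  have := (Set.ncard_le_ncard (chainParent_children_subset par port x)).trans
    (Set.ncard_union_le _ _)
  have := ncard_neighborSet_parentGraph_le (chainParent par port) x
  omega

theorem ncard_neighborSet_chainTree_le [Finite τ] (hport : Function.Injective port)
    (x : τ × Fin N) : ((parentGraph (chainParent par port)).neighborSet x).ncard ≤ 3 := by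
  have : {y : τ × Fin N | y.2.val = 0 ∧ port y.1 = x.2}.ncard ≤ 1 :=
    (Set.ncard_le_one_iff).2 fun ⟨ha₁, ha₂⟩ ⟨hb₁, hb₂⟩ =>
      Prod.ext (hport (ha₂.trans hb₂.symm)) (Fin.ext (ha₁.trans hb₁.symm))
  have := ncard_neighborSet_chainTree_le_add par port x
  omega

theorem ncard_neighborSet_chainTree_le_two [Finite τ] {x : τ × Fin N}
    (hx : x.2 ∉ Set.range port) :
    ((parentGraph (chainParent par port)).neighborSet x).ncard ≤ 2 := by
  have : {y : τ × Fin N | y.2.val = 0 ∧ port y.1 = x.2} = ∅ :=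
    Set.eq_empty_of_forall_notMem fun y hy => hx ⟨y.1, hy.2⟩
  simpa [this] using ncard_neighborSet_chainTree_le_add par port x

theorem chainTree_adj_of_succ {t : τ} {k k' : Fin N} (hk : k.val + 1 = k'.val) :
    (parentGraph (chainParent par port)).Adj (t, k) (t, k') := by
  refine parentGraph_adj.2 ⟨fun h => by simp_all, Or.inr ?_⟩
  rw [chainParent_of_ne_zero par port (by omega)]
  exact Prod.ext rfl (Fin.ext (by simp only; omega))

theorem chainTree_adj_of_parent {t : τ} {k : Fin N} (hk : k.val = 0) (ht : par t ≠ t) :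
    (parentGraph (chainParent par port)).Adj (t, k) (par t, port t) :=
  parentGraph_adj.2 ⟨fun h => ht (congrArg Prod.fst h).symm,
    Or.inl (chainParent_of_eq_zero par port hk ht)⟩

theorem reachable_induce_chainTree_zero [NeZero N] {X : Set τ} (x : Prod.fst ⁻¹' X) :
    ((parentGraph (chainParent par port)).induce (Prod.fst ⁻¹' X)).Reachable
      x ⟨(x.1.1, 0), x.2⟩ := by
  let f : pathGraph N →g (parentGraph (chainParent par port)).induce (Prod.fst ⁻¹' X) :=
    { toFun := fun k => ⟨(x.1.1, k), x.2⟩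
      map_rel' := fun h => by
        rcases pathGraph_adj.1 h with h | h
        · exact chainTree_adj_of_succ par port h
        · exact (chainTree_adj_of_succ par port h).symm }
  exact (pathGraph_preconnected N x.1.2 0).map f

theorem connected_induce_chainTree [NeZero N] {X : Set τ}
    (hX : ((parentGraph par).induce X).Connected) :
    ((parentGraph (chainParent par port)).induce (Prod.fst ⁻¹' X)).Connected := by
  set H := (parentGraph (chainParent par port)).induce (Prod.fst ⁻¹' X)
  let base : X → (Prod.fst ⁻¹' X : Set (τ × Fin N)) := fun t => ⟨(t.1, 0), t.2⟩
  have up : ∀ t t' : X, par t.1 = t'.1 → t.1 ≠ t'.1 → H.Reachable (base t) (base t') := by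
    rintro ⟨t, ht⟩ ⟨_, ht'⟩ rfl hne
    have hadj : H.Adj (base ⟨t, ht⟩) ⟨(par t, port t), ht'⟩ :=
      chainTree_adj_of_parent par port rfl hne.symm
    exact hadj.reachable.trans (reachable_induce_chainTree_zero par port _)
  have hbase : ∀ t t' : X, H.Reachable (base t) (base t') := fun t t' => by
    obtain ⟨w⟩ := hX.preconnected t t'
    induction w with
    | nil => rfl
    | cons h _ ih =>
      obtain ⟨hne, h | h⟩ := parentGraph_adj.1 h
      exacts [(up _ _ h hne).trans ih, (up _ _ h hne.symm).symm.trans ih]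
  obtain ⟨t₀⟩ := hX.nonempty
  refine (connected_iff_exists_forall_reachable _).2 ⟨base t₀, fun x => ?_⟩
  exact (hbase t₀ ⟨x.1.1, x.2⟩).trans (reachable_induce_chainTree_zero par port x).symm

theorem isTree_chainTree [NeZero N] (hpar : (parentGraph par).Connected) (rank : τ → ℕ)
    (hrank : ∀ a, par a ≠ a → rank (par a) < rank a) :
    (parentGraph (chainParent par port)).IsTree := by
  have h := connected_induce_chainTree par port (X := Set.univ)
    ((induceUnivIso _).connected_iff.2 hpar)
  rw [Set.preimage_univ] at h
  exact ⟨(induceUnivIso _).connected_iff.1 h, isAcyclic_chainTree par port rank hrank⟩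

end ChainTree

section Splitting

variable {V σ : Type} (G : SimpleGraph V) (T : SimpleGraph σ) (Q : σ → Finset V)
  (ι : Sym2 V → σ)

/-- `⟨(u, s), _⟩` is the copy of `u` in the bag `Q s`. -/
abbrev SplitVert : Type := {x : V × σ // x.1 ∈ Q x.2}

/-- Copies of a vertex in adjacent bags are joined, and each edge `uv` of `G` is realised once,
between the copies of `u` and `v` in the bag `ι s(u, v)`. -/
def splitGraph : SimpleGraph (SplitVert Q) where
  Adj x y := (x.1.1 = y.1.1 ∧ T.Adj x.1.2 y.1.2) ∨
    (x.1.2 = y.1.2 ∧ G.Adj x.1.1 y.1.1 ∧ ι s(x.1.1, y.1.1) = x.1.2)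
  symm := ⟨by
    rintro x y (⟨h₁, h₂⟩ | ⟨h₁, h₂, h₃⟩)
    · exact Or.inl ⟨h₁.symm, h₂.symm⟩
    · exact Or.inr ⟨h₁.symm, h₂.symm, by rw [Sym2.eq_swap, h₃, h₁]⟩⟩
  loopless := ⟨by
    rintro x (⟨-, h⟩ | ⟨-, h, -⟩)
    exacts [h.ne rfl, h.ne rfl]⟩

variable {G T Q ι}

theorem fst_splitVert_surjective (hQ : ∀ u, ∃ s, u ∈ Q s) :
    Function.Surjective fun x : SplitVert Q => x.1.1 := fun u =>
  let ⟨s, hs⟩ := hQ u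
  ⟨⟨(u, s), hs⟩, rfl⟩

theorem splitGraph_adj_of_fst_ne {x y : SplitVert Q} (h : (splitGraph G T Q ι).Adj x y)
    (hne : x.1.1 ≠ y.1.1) : G.Adj x.1.1 y.1.1 :=
  h.elim (fun h => absurd h.1 hne) fun h => h.2.1

theorem splitGraph_existsUnique_edge
    (hι : ∀ u v, G.Adj u v → u ∈ Q (ι s(u, v)) ∧ v ∈ Q (ι s(u, v))) {u v : V} (huv : G.Adj u v) :
    ∃ w w' : SplitVert Q, w.1.1 = u ∧ w'.1.1 = v ∧ (splitGraph G T Q ι).Adj w w' ∧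
      ∀ w₂ w₂' : SplitVert Q, w₂.1.1 = u → w₂'.1.1 = v → (splitGraph G T Q ι).Adj w₂ w₂' →
        w₂ = w ∧ w₂' = w' := by
  refine ⟨⟨(u, _), (hι u v huv).1⟩, ⟨(v, _), (hι u v huv).2⟩, rfl, rfl, Or.inr ⟨rfl, huv, rfl⟩, ?_⟩
  rintro ⟨⟨u', s⟩, hs⟩ ⟨⟨v', s'⟩, hs'⟩ (rfl : u' = u) (rfl : v' = v) (⟨h, -⟩ | ⟨hs, -, hι'⟩)
  · exact absurd h huv.ne
  · obtain rfl : s = s' := hs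
    obtain rfl : ι s(u', v') = s := hι'
    exact ⟨rfl, rfl⟩

def splitGraphFiberIso (u : V) :
    (splitGraph G T Q ι).induce ((fun x : SplitVert Q => x.1.1) ⁻¹' {u}) ≃g
      T.induce {s | u ∈ Q s} where
  toFun x := ⟨x.1.1.2, by obtain ⟨⟨⟨v, s⟩, hs⟩, rfl : v = u⟩ := x; exact hs⟩
  invFun s := ⟨⟨(u, s.1), s.2⟩, rfl⟩
  left_inv := by
    rintro ⟨⟨⟨v, s⟩, hs⟩, rfl : v = u⟩
    rfl
  right_inv _ := rfl
  map_rel_iff' := by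
    rintro ⟨⟨⟨v, s⟩, hs⟩, rfl : v = u⟩ ⟨⟨⟨v', s'⟩, hs'⟩, rfl : v' = v⟩
    simp only [Equiv.coe_fn_mk, comap_adj, Function.Embedding.coe_subtype]
    exact ⟨fun h => Or.inl ⟨rfl, h⟩, fun h => h.elim And.right fun h => absurd h.2.1 (G.irrefl)⟩

theorem isTree_induce_splitGraph_fiber (hT : T.IsAcyclic) {u : V}
    (hu : (T.induce {s | u ∈ Q s}).Connected) :
    ((splitGraph G T Q ι).induce ((fun x : SplitVert Q => x.1.1) ⁻¹' {u})).IsTree :=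
  (splitGraphFiberIso u).isTree_iff.2 ⟨hu, hT.induce _⟩

theorem ncard_neighborSet_splitGraph_le [Finite V] [Finite σ]
    (hT : ∀ s, (T.neighborSet s).ncard ≤ 3)
    (hslot : ∀ e ∈ G.edgeSet, (T.neighborSet (ι e)).ncard ≤ 2)
    (hι : Set.InjOn ι G.edgeSet) (x : SplitVert Q) :
    ((splitGraph G T Q ι).neighborSet x).ncard ≤ 3 := by
  obtain ⟨⟨u, s⟩, hx⟩ := x
  set cross := {v | G.Adj u v ∧ ι s(u, v) = s}
  have hsub : Subtype.val '' (splitGraph G T Q ι).neighborSet ⟨(u, s), hx⟩ ⊆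
      Prod.mk u '' T.neighborSet s ∪ (fun v => (v, s)) '' cross := by
    rintro _ ⟨⟨⟨v, s'⟩, hy⟩, ⟨rfl, h⟩ | ⟨rfl, h, h'⟩, rfl⟩
    exacts [Or.inl ⟨s', h, rfl⟩, Or.inr ⟨v, ⟨h, h'⟩, rfl⟩]
  have hcard : ((splitGraph G T Q ι).neighborSet ⟨(u, s), hx⟩).ncard ≤
      (T.neighborSet s).ncard + cross.ncard := by
    rw [← Set.ncard_image_of_injective _ Subtype.val_injective]
    exact (Set.ncard_le_ncard hsub).trans <| (Set.ncard_union_le _ _).trans <|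
      add_le_add (Set.ncard_image_le (Set.toFinite _)) (Set.ncard_image_le (Set.toFinite _))
  by_cases hs : cross.Nonempty
  · obtain ⟨v, huv, rfl⟩ := hs
    have hcross : cross.ncard ≤ 1 :=
      (Set.ncard_le_one_iff (Set.toFinite _)).2 fun ⟨ha, ha'⟩ ⟨hb, hb'⟩ =>
        Sym2.congr_right.1 (hι ha hb (ha'.trans hb'.symm))
    have := hslot s(u, v) (G.mem_edgeSet.2 huv)
    omega
  · rw [Set.not_nonempty_iff_eq_empty.1 hs, Set.ncard_empty] at hcard
    exact hcard.trans (hT s)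

variable [DecidableEq V] [DecidableEq σ]

variable (Q) in
/-- The bag of `s` holds the copies of `Q s` in `s` and, as an adhesion to the parent of `s`,
the copies in `p s` of the vertices of `Q s`. -/
def splitBag (p : σ → σ) (s : σ) : Finset (SplitVert Q) :=
  ((Q s).image (·, s) ∪ (Q s ∩ Q (p s)).image (·, p s)).subtype _

theorem mem_splitBag {p : σ → σ} {s : σ} {x : SplitVert Q} :
    x ∈ splitBag Q p s ↔ x.1.2 = s ∨ (x.1.2 = p s ∧ x.1.1 ∈ Q s) := by
  obtain ⟨⟨u, s'⟩, hx⟩ := x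
  simp only [splitBag, Finset.mem_subtype, Finset.mem_union, Finset.mem_image, Finset.mem_inter,
    Prod.mk.injEq]
  constructor
  · rintro (⟨_, h, rfl, rfl⟩ | ⟨_, ⟨h, -⟩, rfl, rfl⟩)
    exacts [Or.inl rfl, Or.inr ⟨rfl, h⟩]
  · rintro (rfl | ⟨rfl, h⟩)
    exacts [Or.inl ⟨u, hx, rfl, rfl⟩, Or.inr ⟨u, ⟨h, hx⟩, rfl, rfl⟩]

theorem card_splitBag_le (p : σ → σ) (s : σ) : (splitBag Q p s).card ≤ 2 * (Q s).card := by
  unfold splitBag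
  rw [Finset.card_subtype, two_mul]
  exact (Finset.card_filter_le _ _).trans <| (Finset.card_union_le _ _).trans <|
    add_le_add Finset.card_image_le <| Finset.card_image_le.trans <|
      Finset.card_le_card Finset.inter_subset_left

theorem isTreeDecomp_splitGraph {p : σ → σ} (hp : (parentGraph p).IsTree) :
    IsTreeDecomp (splitGraph G (parentGraph p) Q ι) (parentGraph p) (splitBag Q p) := by
  refine ⟨hp, fun x => ?_, ?_⟩
  · refine connected_induce_of_forall_eq_or_adj (mem_splitBag.2 (Or.inl rfl)) fun s hs => ?_
    rcases mem_splitBag.1 hs with h | ⟨h, -⟩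
    · exact Or.inl h.symm
    · exact (eq_or_ne s x.1.2).imp id fun hne => parentGraph_adj.2 ⟨hne.symm, Or.inr h.symm⟩
  · rintro x y (⟨hxy, hne, h | h⟩ | ⟨h, -⟩)
    · exact ⟨x.1.2, mem_splitBag.2 (Or.inl rfl), mem_splitBag.2 (Or.inr ⟨h.symm, hxy ▸ x.2⟩)⟩
    · exact ⟨y.1.2, mem_splitBag.2 (Or.inr ⟨h.symm, hxy ▸ y.2⟩), mem_splitBag.2 (Or.inl rfl)⟩
    · exact ⟨x.1.2, mem_splitBag.2 (Or.inl rfl), mem_splitBag.2 (Or.inl h.symm)⟩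

end Splitting

end SimpleGraph

/-- Lemma: good vertex splittings exist. If `G` has a tree-decomposition of
width at most `Z`, then there is a simplification `Gbar` of `G` (each vertex of `G` is split
into a tree of vertices of degree at most 3, with exactly one edge of `Gbar` between the fibers
of adjacent vertices of `G`) admitting a tree-decomposition of width at most `2Z + 1`. -/
theorem good_vertex_splitting
    {V : Type} [Fintype V] (G : SimpleGraph V) (Z : ℕ)
    {τ : Type} [Fintype τ] (T : SimpleGraph τ) (Q : τ → Finset V)
    (hTD : IsTreeDecomp G T Q) (hw : ∀ t, (Q t).card ≤ Z + 1) :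
    ∃ (W : Type) (_ : Fintype W) (Gbar : SimpleGraph W) (φ : W → V),
      Function.Surjective φ ∧
      (∀ w : W, (Gbar.neighborSet w).ncard ≤ 3) ∧
      (∀ u : V, (Gbar.induce (φ ⁻¹' {u})).IsTree) ∧
      (∀ w w' : W, Gbar.Adj w w' → φ w ≠ φ w' → G.Adj (φ w) (φ w')) ∧
      (∀ u v : V, G.Adj u v →
        ∃ w w' : W, φ w = u ∧ φ w' = v ∧ Gbar.Adj w w' ∧
          ∀ w₂ w₂' : W, φ w₂ = u → φ w₂' = v → Gbar.Adj w₂ w₂' → w₂ = w ∧ w₂' = w') ∧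
      (∃ (σ : Type) (_ : Fintype σ) (T' : SimpleGraph σ) (Q' : σ → Finset W),
        IsTreeDecomp Gbar T' Q' ∧ ∀ t, (Q' t).card ≤ 2 * Z + 2) := by
  classical
  obtain ⟨hT, hocc, hcover⟩ := hTD
  have : Nonempty τ := hT.connected.nonempty
  obtain ⟨par, rank, rfl, hrank⟩ := hT.exists_eq_parentGraph
  obtain ⟨κ, hκ⟩ := exists_edge_bag_assignment hcover
  -- every path gets a position for each potential child and for each potential edge
  let N := Fintype.card (τ ⊕ Sym2 V)
  let pos : τ ⊕ Sym2 V ≃ Fin N := Fintype.equivFin _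
  have : NeZero N := ⟨Fintype.card_ne_zero⟩
  let port : τ → Fin N := fun t => pos (Sum.inl t)
  let ι : Sym2 V → τ × Fin N := fun e => (κ e, pos (Sum.inr e))
  let T' := parentGraph (chainParent par port)
  let Q' : τ × Fin N → Finset V := fun x => Q x.1
  have hT' : T'.IsTree := isTree_chainTree par port hT.connected rank hrank
  refine ⟨SplitVert Q', Fintype.ofFinite _, splitGraph G T' Q' ι, fun x => x.1.1,
    fst_splitVert_surjective fun u => ?_, ncard_neighborSet_splitGraph_le
      (ncard_neighborSet_chainTree_le par port (pos.injective.comp Sum.inl_injective))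
      (fun e _ => ncard_neighborSet_chainTree_le_two par port fun ⟨t, ht⟩ =>
        Sum.inl_ne_inr (pos.injective ht))
      (fun e _ e' _ h => Sum.inr_injective (pos.injective (congrArg Prod.snd h))),
    fun u => isTree_induce_splitGraph_fiber hT'.isAcyclic
      (connected_induce_chainTree par port (hocc u)),
    fun w w' h hne => splitGraph_adj_of_fst_ne h hne,
    fun u v huv => splitGraph_existsUnique_edge (Q := Q') (ι := ι) hκ huv,
    τ × Fin N, inferInstance, T', splitBag Q' (chainParent par port), isTreeDecomp_splitGraph hT',
    fun s => (card_splitBag_le _ s).trans (by have := hw s.1; simp only [Q']; omega)⟩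
  obtain ⟨⟨t, ht⟩⟩ := (hocc u).nonempty
  exact ⟨(t, 0), ht⟩
end

section
/- Let f_1, …, f_m be real polynomials in variables x_1, …, x_n, let 0 ≤ p ≤ n, and let π ≥ 1 bound, for every i and every monomial x^α with nonzero coefficient in f_i, the quantity Σ_{j=p+1}^n α_j. Let 0 < γ < 1, δ = 1 − (1 − γ)^π and L = ⌈log₂(1/γ)⌉. Suppose x̃ satisfies f_i(x̃) ≥ 0 for all 1 ≤ i ≤ m, x̃_j ∈ {0,1} for 1 ≤ j ≤ p and x̃_j ∈ [0,1] for p+1 ≤ j ≤ n. Then there exist values z_{j,h} ∈ {0,1} (p+1 ≤ j ≤ n, 1 ≤ h ≤ L) such that, defining x' by x'_j = x̃_j for 1 ≤ j ≤ p and x'_j = Σ_{h=1}^L 2^{-h} z_{j,h} for p+1 ≤ j ≤ n, we have f_i(x') ≥ −δ·‖f_i‖₁ for every 1 ≤ i ≤ m, and Σ_{j=1}^n c_j x'_j ≤ Σ_{j=1}^n c_j x̃_j + δ·‖c‖₁ for every c ∈ ℝ^n, where ‖c‖₁ = Σ_j |c_j|. -/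
open Finset

/-- The 1-norm of a real multivariate polynomial: the sum of the absolute values of its
coefficients. -/
noncomputable def polyNorm1 {n : ℕ} (f : MvPolynomial (Fin n) ℝ) : ℝ :=
  ∑ α ∈ f.support, |f.coeff α|

/-!
Truncate every continuous coordinate of `xt` to its first `L` binary digits. This moves each
coordinate down by at most `2⁻ᴸ ≤ γ`, which changes the linear objective by at most
`γ ‖c‖₁ ≤ δ ‖c‖₁`. For a monomial, `∏ bⱼ - ∏ aⱼ ≤ 1 - ∏ (1 - (bⱼ - aⱼ))` on `[0,1]`, so lowering
`π` continuous factors by at most `γ` costs at most `1 - (1 - γ)^π = δ`; summing over the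
monomials of `fᵢ` with their coefficients gives `fᵢ(x') ≥ fᵢ(xt) - δ ‖fᵢ‖₁ ≥ -δ ‖fᵢ‖₁`.
-/

theorem prod_sub_prod_le_one_sub_prod_one_sub {ι : Type*} (s : Finset ι) {a b : ι → ℝ}
    (ha : ∀ j ∈ s, 0 ≤ a j) (hab : ∀ j ∈ s, a j ≤ b j) (hb : ∀ j ∈ s, b j ≤ 1) :
    ∏ j ∈ s, b j - ∏ j ∈ s, a j ≤ 1 - ∏ j ∈ s, (1 - (b j - a j)) := by
  induction s using Finset.cons_induction with
  | empty => simp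
  | cons i s hi ih =>
    simp only [forall_mem_cons] at ha hab hb
    have ih := ih ha.2 hab.2 hb.2
    have hA : ∏ j ∈ s, a j ≤ ∏ j ∈ s, b j := prod_le_prod ha.2 hab.2
    have hB : ∏ j ∈ s, b j ≤ 1 :=
      prod_le_one (fun j hj => (ha.2 j hj).trans (hab.2 j hj)) hb.2
    rw [prod_cons, prod_cons, prod_cons]
    nlinarith [mul_nonneg (sub_nonneg.2 hb.1) (sub_nonneg.2 hA),
      mul_nonneg (sub_nonneg.2 hab.1) (sub_nonneg.2 hB),
      mul_nonneg (by linarith : 0 ≤ 1 - (b i - a i)) (sub_nonneg.2 ih)]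

theorem prod_pow_sub_prod_pow_le_one_sub_prod_pow {ι : Type*} (s : Finset ι) (k : ι → ℕ)
    {a b : ι → ℝ} (ha : ∀ j ∈ s, 0 ≤ a j) (hab : ∀ j ∈ s, a j ≤ b j) (hb : ∀ j ∈ s, b j ≤ 1) :
    ∏ j ∈ s, b j ^ k j - ∏ j ∈ s, a j ^ k j ≤ 1 - ∏ j ∈ s, (1 - (b j - a j)) ^ k j := by
  have key := prod_sub_prod_le_one_sub_prod_one_sub (s.sigma fun j => range (k j))
    (a := fun x => a x.1) (b := fun x => b x.1)
    (fun x hx => ha x.1 (mem_sigma.1 hx).1) (fun x hx => hab x.1 (mem_sigma.1 hx).1)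
    (fun x hx => hb x.1 (mem_sigma.1 hx).1)
  simpa only [prod_sigma, prod_const, card_range] using key

theorem prod_pow_sub_prod_pow_le_one_sub_pow {σ : Type*} [Fintype σ] (P : σ → Prop)
    [DecidablePred P] (k : σ → ℕ) {a b : σ → ℝ} {γ : ℝ} (ha : ∀ j, 0 ≤ a j)
    (hab : ∀ j, a j ≤ b j) (hb : ∀ j, b j ≤ 1) (hγ : ∀ j, b j - a j ≤ γ) (hγ1 : γ ≤ 1)
    (hP : ∀ j, ¬P j → a j = b j) :
    ∏ j, b j ^ k j - ∏ j, a j ^ k j ≤ 1 - (1 - γ) ^ ∑ j with P j, k j := by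
  refine (prod_pow_sub_prod_pow_le_one_sub_prod_pow univ k (fun j _ => ha j)
    (fun j _ => hab j) (fun j _ => hb j)).trans (sub_le_sub_left ?_ 1)
  rw [← prod_pow_eq_pow_sum, prod_filter]
  refine prod_le_prod (fun j _ => by split_ifs <;> positivity) fun j _ => ?_
  by_cases hj : P j
  · rw [if_pos hj]
    exact pow_le_pow_left₀ (by linarith) (by linarith [hγ j]) _
  · rw [if_neg hj, hP j hj, sub_self, sub_zero, one_pow]

theorem abs_eval_sub_eval_le {n : ℕ} (f : MvPolynomial (Fin n) ℝ) (x y : Fin n → ℝ) {ε : ℝ}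
    (h : ∀ α ∈ f.support, |∏ j, x j ^ α j - ∏ j, y j ^ α j| ≤ ε) :
    |MvPolynomial.eval x f - MvPolynomial.eval y f| ≤ ε * polyNorm1 f := by
  rw [MvPolynomial.eval_eq', MvPolynomial.eval_eq', ← sum_sub_distrib, polyNorm1, mul_sum]
  refine (abs_sum_le_sum_abs _ _).trans (sum_le_sum fun α hα => ?_)
  rw [← mul_sub, abs_mul, mul_comm ε]
  exact mul_le_mul_of_nonneg_left (h α hα) (abs_nonneg _)

theorem sum_mul_sub_sum_mul_le {ι : Type*} (s : Finset ι) (c x y : ι → ℝ) {ε : ℝ}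
    (h : ∀ j ∈ s, |x j - y j| ≤ ε) :
    ∑ j ∈ s, c j * x j - ∑ j ∈ s, c j * y j ≤ ε * ∑ j ∈ s, |c j| := by
  rw [← sum_sub_distrib, mul_sum]
  refine sum_le_sum fun j hj => ?_
  rw [← mul_sub, mul_comm ε]
  exact (le_abs_self _).trans <| (abs_mul _ _).trans_le <|
    mul_le_mul_of_nonneg_left (h j hj) (abs_nonneg _)

noncomputable def binarySum (L : ℕ) (z : ℕ → Bool) : ℝ :=
  ∑ h ∈ Icc 1 L, ((1 : ℝ) / 2) ^ h * (if z h then 1 else 0)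

theorem binarySum_nonneg (L : ℕ) (z : ℕ → Bool) : 0 ≤ binarySum L z :=
  sum_nonneg fun _ _ => mul_nonneg (by positivity) (by split_ifs <;> norm_num)

theorem binarySum_succ_update (L : ℕ) (z : ℕ → Bool) (b : Bool) :
    binarySum (L + 1) (Function.update z (L + 1) b) =
      binarySum L z + ((1 : ℝ) / 2) ^ (L + 1) * (if b then 1 else 0) := by
  rw [binarySum, sum_Icc_succ_top (by omega), Function.update_self, binarySum]
  congr 1
  refine sum_congr rfl fun h hh => ?_
  rw [Function.update_of_ne (by have := (mem_Icc.1 hh).2; omega)]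

theorem exists_binarySum_le_le {v : ℝ} (hv0 : 0 ≤ v) (hv1 : v ≤ 1) (L : ℕ) :
    ∃ z, binarySum L z ≤ v ∧ v ≤ binarySum L z + ((1 : ℝ) / 2) ^ L := by
  induction L with
  | zero => exact ⟨fun _ => false, by simpa [binarySum] using hv0, by simpa [binarySum] using hv1⟩
  | succ L ih =>
    obtain ⟨z, hz⟩ := ih
    have hhalf : ((1 : ℝ) / 2) ^ L = 2 * ((1 : ℝ) / 2) ^ (L + 1) := by ring
    by_cases hbit : ((1 : ℝ) / 2) ^ (L + 1) ≤ v - binarySum L z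
    · refine ⟨Function.update z (L + 1) true, ?_⟩
      rw [binarySum_succ_update]
      constructor <;> norm_num <;> linarith
    · refine ⟨Function.update z (L + 1) false, ?_⟩
      rw [binarySum_succ_update]
      constructor <;> norm_num <;> linarith

theorem one_div_two_pow_ceil_logb_le {γ : ℝ} (hγ : 0 < γ) :
    ((1 : ℝ) / 2) ^ ⌈Real.logb 2 (1 / γ)⌉₊ ≤ γ := by
  have h : 1 / γ ≤ 2 ^ ⌈Real.logb 2 (1 / γ)⌉₊ := by
    rw [← Real.rpow_natCast, ← Real.logb_le_iff_le_rpow one_lt_two (by positivity)]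
    exact Nat.le_ceil _
  rw [one_div_pow, div_le_iff₀ (by positivity)]
  rw [div_le_iff₀ hγ] at h
  linarith

theorem po_binary_approximation_general
    (n m p : ℕ) (f : Fin m → MvPolynomial (Fin n) ℝ)
    (π : ℕ) (hπ : 1 ≤ π)
    (hdeg : ∀ i, ∀ α ∈ (f i).support,
      (∑ j ∈ Finset.univ.filter (fun j : Fin n => p ≤ (j : ℕ)), α j) ≤ π)
    (γ δ : ℝ) (hγ0 : 0 < γ) (hγ1 : γ < 1) (hδ : δ = 1 - (1 - γ) ^ π)
    (L : ℕ) (hL : L = ⌈Real.logb 2 (1 / γ)⌉₊)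
    (xt : Fin n → ℝ)
    (hfeas : ∀ i, 0 ≤ MvPolynomial.eval xt (f i))
    (hbin : ∀ j : Fin n, (j : ℕ) < p → xt j = 0 ∨ xt j = 1)
    (hbox : ∀ j : Fin n, p ≤ (j : ℕ) → 0 ≤ xt j ∧ xt j ≤ 1) :
    ∃ z : Fin n → ℕ → Bool,
      ∀ x' : Fin n → ℝ,
        (∀ j : Fin n, (j : ℕ) < p → x' j = xt j) →
        (∀ j : Fin n, p ≤ (j : ℕ) →
          x' j = ∑ h ∈ Finset.Icc 1 L, ((1 : ℝ) / 2) ^ h * (if z j h then 1 else 0)) →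
        (∀ i, -(δ * polyNorm1 (f i)) ≤ MvPolynomial.eval x' (f i)) ∧
        (∀ c : Fin n → ℝ, (∑ j, c j * x' j) ≤ (∑ j, c j * xt j) + δ * ∑ j, |c j|) := by
  have hxt (j : Fin n) : 0 ≤ xt j ∧ xt j ≤ 1 := by
    rcases le_or_gt p j with hj | hj
    · exact hbox j hj
    · rcases hbin j hj with h | h <;> simp [h]
  choose z hz using fun j => exists_binarySum_le_le (hxt j).1 (hxt j).2 L
  refine ⟨z, fun x' hdisc hcont => ?_⟩
  have hγL : ((1 : ℝ) / 2) ^ L ≤ γ := hL ▸ one_div_two_pow_ceil_logb_le hγ0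
  have hx' (j : Fin n) : 0 ≤ x' j ∧ x' j ≤ xt j ∧ xt j - x' j ≤ γ := by
    rcases le_or_gt p j with hj | hj
    · rw [show x' j = binarySum L (z j) from hcont j hj]
      exact ⟨binarySum_nonneg L (z j), (hz j).1, by linarith [(hz j).2]⟩
    · rw [hdisc j hj]
      exact ⟨(hxt j).1, le_rfl, by linarith⟩
  have hmon : ∀ i, ∀ α ∈ (f i).support, |∏ j, xt j ^ α j - ∏ j, x' j ^ α j| ≤ δ := by
    intro i α hα
    rw [abs_of_nonneg (sub_nonneg.2 (prod_le_prod (fun j _ => pow_nonneg (hx' j).1 _)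
      fun j _ => pow_le_pow_left₀ (hx' j).1 (hx' j).2.1 _))]
    refine (prod_pow_sub_prod_pow_le_one_sub_pow (fun j : Fin n => p ≤ (j : ℕ)) α
      (fun j => (hx' j).1) (fun j => (hx' j).2.1) (fun j => (hxt j).2) (fun j => (hx' j).2.2)
      hγ1.le fun j hj => hdisc j (not_le.1 hj)).trans ?_
    rw [hδ]
    exact sub_le_sub_left (pow_le_pow_of_le_one (by linarith) (by linarith) (hdeg i α hα)) 1
  refine ⟨fun i => ?_, fun c => ?_⟩
  · have := abs_le.1 (abs_eval_sub_eval_le (f i) xt x' (hmon i))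
    linarith [hfeas i]
  · have hpow : (1 - γ) ^ π ≤ (1 - γ) ^ 1 := pow_le_pow_of_le_one (by linarith) (by linarith) hπ
    have := sum_mul_sub_sum_mul_le univ c x' xt (ε := δ) fun j _ => by
      rw [abs_sub_comm, abs_of_nonneg (by linarith [(hx' j).2.1])]
      linarith [(hx' j).2.2]
    linarith

/-- Lemma 7: reduction of PO to pure binary via binary expansion. Given a
feasible point `xt` of the PO instance `f₁, …, f_m` (the first `p` variables binary, the rest
in `[0,1]`), with `π` bounding the continuous degree of every monomial, `0 < γ < 1`,
`δ = 1 - (1-γ)^π` and `L = ⌈log₂(1/γ)⌉`, there are bits `z j h` such that the point `x'`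
obtained by keeping the binary coordinates of `xt` and replacing each continuous coordinate by
`∑_{h=1}^{L} 2⁻ʰ z j h` satisfies `f i (x') ≥ -δ ‖f i‖₁` for all `i`, and
`c ⬝ x' ≤ c ⬝ xt + δ ‖c‖₁` for every cost vector `c`. -/
theorem po_binary_approximation
    (n m p : ℕ) (hp : p ≤ n) (f : Fin m → MvPolynomial (Fin n) ℝ)
    (π : ℕ) (hπ : 1 ≤ π)
    (hdeg : ∀ i, ∀ α ∈ (f i).support,
      (∑ j ∈ Finset.univ.filter (fun j : Fin n => p ≤ (j : ℕ)), α j) ≤ π)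
    (γ δ : ℝ) (hγ0 : 0 < γ) (hγ1 : γ < 1) (hδ : δ = 1 - (1 - γ) ^ π)
    (L : ℕ) (hL : L = ⌈Real.logb 2 (1 / γ)⌉₊)
    (xt : Fin n → ℝ)
    (hfeas : ∀ i, 0 ≤ MvPolynomial.eval xt (f i))
    (hbin : ∀ j : Fin n, (j : ℕ) < p → xt j = 0 ∨ xt j = 1)
    (hbox : ∀ j : Fin n, p ≤ (j : ℕ) → 0 ≤ xt j ∧ xt j ≤ 1) :
    ∃ z : Fin n → ℕ → Bool,
      ∀ x' : Fin n → ℝ,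
        (∀ j : Fin n, (j : ℕ) < p → x' j = xt j) →
        (∀ j : Fin n, p ≤ (j : ℕ) →
          x' j = ∑ h ∈ Finset.Icc 1 L, ((1 : ℝ) / 2) ^ h * (if z j h then 1 else 0)) →
        (∀ i, -(δ * polyNorm1 (f i)) ≤ MvPolynomial.eval x' (f i)) ∧
        (∀ c : Fin n → ℝ, (∑ j, c j * x' j) ≤ (∑ j, c j * xt j) + δ * ∑ j, |c j|) :=
  po_binary_approximation_general n m p f π hπ hdeg γ δ hγ0 hγ1 hδ L hL xt hfeas hbin hbox
end

section
/- Suppose that for 1 ≤ k ≤ r we have real numbers u_k ≥ 0, v_k ≥ 0 with u_k + v_k ≤ 1, and natural numbers q_k. Then Π_{k=1}^r (u_k + v_k)^{q_k} − Π_{k=1}^r u_k^{q_k} ≤ 1 − Π_{k=1}^r (1 − v_k)^{q_k}. -/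
/-!
Induct on the factors with the stronger hypotheses `0 ≤ b ≤ a ≤ 1`, `b ≤ c`, `a - b ≤ 1 - c`
for each factor `(a, b, c)`. The step rests on the identity
`(1 - c C) - (a (1 - C) + (1 - c) B) = (1 - a) (1 - C) + (1 - c) (C - B)`.
These hypotheses are preserved by products and hold for `(u + v, u, 1 - v)`, so the lemma applies
first to the `q k` equal factors of a power and then to the `r` powers.
-/

open Finset

variable {ι R : Type*} [CommRing R] [LinearOrder R] [IsStrictOrderedRing R]

theorem Finset.prod_sub_prod_le_one_sub_prod (s : Finset ι) {a b c : ι → R}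
    (hb : ∀ i ∈ s, 0 ≤ b i) (hba : ∀ i ∈ s, b i ≤ a i) (ha : ∀ i ∈ s, a i ≤ 1)
    (hbc : ∀ i ∈ s, b i ≤ c i) (habc : ∀ i ∈ s, a i - b i ≤ 1 - c i) :
    ∏ i ∈ s, a i - ∏ i ∈ s, b i ≤ 1 - ∏ i ∈ s, c i := by
  induction s using Finset.cons_induction with
  | empty => simp
  | cons i s _ ih =>
    simp only [mem_cons, forall_eq_or_imp] at hb hba ha hbc habc
    set A := ∏ j ∈ s, a j
    set B := ∏ j ∈ s, b j
    set C := ∏ j ∈ s, c j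
    have hAB : A - B ≤ 1 - C := ih hb.2 hba.2 ha.2 hbc.2 habc.2
    have hB : 0 ≤ B := prod_nonneg hb.2
    have hBA : B ≤ A := prod_le_prod hb.2 hba.2
    have hBC : B ≤ C := prod_le_prod hb.2 hbc.2
    have ha0 : 0 ≤ a i := hb.1.trans hba.1
    rw [prod_cons, prod_cons, prod_cons]
    calc a i * A - b i * B = a i * (A - B) + (a i - b i) * B := by ring
      _ ≤ a i * (1 - C) + (1 - c i) * B :=
        add_le_add (mul_le_mul_of_nonneg_left hAB ha0) (mul_le_mul_of_nonneg_right habc.1 hB)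
      _ ≤ 1 - c i * C := by
        linarith [mul_nonneg (sub_nonneg.2 ha.1) (show 0 ≤ 1 - C by linarith),
          mul_nonneg (show 0 ≤ 1 - c i by linarith [hba.1, habc.1]) (sub_nonneg.2 hBC)]

theorem add_pow_sub_pow_le_one_sub_pow {x d : R} (hx : 0 ≤ x) (hd : 0 ≤ d) (hxd : x + d ≤ 1)
    (n : ℕ) : (x + d) ^ n - x ^ n ≤ 1 - (1 - d) ^ n := by
  simpa using (range n).prod_sub_prod_le_one_sub_prod (a := fun _ ↦ x + d) (b := fun _ ↦ x)
    (c := fun _ ↦ 1 - d) (fun _ _ ↦ hx) (fun _ _ ↦ le_add_of_nonneg_right hd)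
    (fun _ _ ↦ hxd) (fun _ _ ↦ by linarith) (fun _ _ ↦ by rw [add_sub_cancel_left, sub_sub_cancel])

/-- Lemma 6, technical product inequality. If `0 ≤ u k`, `0 ≤ v k` and
`u k + v k ≤ 1` for all `k`, then
`∏ (u k + v k) ^ q k - ∏ (u k) ^ q k ≤ 1 - ∏ (1 - v k) ^ q k`. -/
theorem product_difference_bound (r : ℕ) (u v : Fin r → ℝ) (q : Fin r → ℕ)
    (hu : ∀ k, 0 ≤ u k) (hv : ∀ k, 0 ≤ v k) (huv : ∀ k, u k + v k ≤ 1) :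
    (∏ k, (u k + v k) ^ q k) - (∏ k, u k ^ q k) ≤ 1 - ∏ k, (1 - v k) ^ q k :=
  univ.prod_sub_prod_le_one_sub_prod
    (fun k _ ↦ pow_nonneg (hu k) _)
    (fun k _ ↦ pow_le_pow_left₀ (hu k) (le_add_of_nonneg_right (hv k)) _)
    (fun k _ ↦ pow_le_one₀ (add_nonneg (hu k) (hv k)) (huv k))
    (fun k _ ↦ pow_le_pow_left₀ (hu k) (le_sub_iff_add_le.2 (huv k)) _)
    (fun k _ ↦ add_pow_sub_pow_le_one_sub_pow (hu k) (hv k) (huv k) _)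
end

section
/- Let n ≥ 2 be an integer, let a_1, …, a_n be positive integers, let S be a positive integer with 2S = Σ_{j=1}^n a_j, let M = 4nS, and let ε be a real number with 0 < ε < 1. Suppose x̂, ŷ ∈ ℝ^n satisfy 0 ≤ x̂_j ≤ 1 and 0 ≤ ŷ_j ≤ 1 for all j, together with: |M·S·ŷ_1 − M·a_1·x̂_1| ≤ ε; |M·S·ŷ_i − M·a_i·x̂_i − M·S·ŷ_{i−1}| ≤ ε for every 2 ≤ i ≤ n; |M·ŷ_n − M| ≤ ε; and M·x̂_j·(1 − x̂_j) ≤ ε for every 1 ≤ j ≤ n. Define x̃ ∈ {0,1}^n by x̃_j = 1 if x̂_j ≥ 1/2 and x̃_j = 0 otherwise. Then Σ_{j=1}^n a_j x̃_j = S. -/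
open Finset

/-! Writing `X = ∑ aⱼ x̂ⱼ`, the chain constraints telescope: `M S ŷ_n` is within `n ε` of `M X`,
and the last constraint puts `M S ŷ_n` within `S ε` of `M S`. The complementarity constraint
`M x̂ⱼ (1 - x̂ⱼ) ≤ ε` forces `x̂ⱼ` to within `2ε / M` of its rounding, so the rounded sum differs
from `X` by at most `4 S ε / M`. Altogether `M |∑ aⱼ x̃ⱼ - S| ≤ (n + 5S) ε < 4nS = M`, and an
integer within distance `< 1` of `S` equals `S`. -/

section Telescoping

variable {E : Type*} [SeminormedAddCommGroup E]

theorem norm_sub_sum_range_le_of_forall_norm_sub_le (y b : ℕ → E) {ε : ℝ}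
    (h0 : ‖y 0 - b 0‖ ≤ ε) :
    ∀ k, (∀ i < k, ‖y (i + 1) - b (i + 1) - y i‖ ≤ ε) →
      ‖y k - ∑ j ∈ range (k + 1), b j‖ ≤ (k + 1) * ε
  | 0, _ => by simpa using h0
  | k + 1, hstep => by
    have ih := norm_sub_sum_range_le_of_forall_norm_sub_le y b h0 k
      fun i hi => hstep i (by omega)
    calc ‖y (k + 1) - ∑ j ∈ range (k + 2), b j‖
        = ‖(y (k + 1) - b (k + 1) - y k) + (y k - ∑ j ∈ range (k + 1), b j)‖ := by
          rw [sum_range_succ]; congr 1; abel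
      _ ≤ ε + (k + 1) * ε := (norm_add_le _ _).trans (add_le_add (hstep k k.lt_succ_self) ih)
      _ = ((k + 1 : ℕ) + 1) * ε := by push_cast; ring

theorem Fin.norm_sub_sum_le_of_forall_norm_sub_le {n : ℕ} (hn : 0 < n) (y b : Fin n → E)
    {ε : ℝ} (h0 : ‖y ⟨0, hn⟩ - b ⟨0, hn⟩‖ ≤ ε)
    (hstep : ∀ i : Fin n, 1 ≤ (i : ℕ) →
      ‖y i - b i - y ⟨(i : ℕ) - 1, Nat.lt_of_le_of_lt (Nat.sub_le _ _) i.isLt⟩‖ ≤ ε) :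
    ‖y ⟨n - 1, by omega⟩ - ∑ i, b i‖ ≤ n * ε := by
  let extend (f : Fin n → E) (j : ℕ) : E := if h : j < n then f ⟨j, h⟩ else 0
  have extend_of_lt (f : Fin n → E) (j : ℕ) (h : j < n) : extend f j = f ⟨j, h⟩ := dif_pos h
  have key := norm_sub_sum_range_le_of_forall_norm_sub_le (extend y) (extend b) (ε := ε)
    (by rwa [extend_of_lt y 0 hn, extend_of_lt b 0 hn]) (n - 1) fun i hi => by
      rw [extend_of_lt y (i + 1) (by omega), extend_of_lt b (i + 1) (by omega),
        extend_of_lt y i (by omega)]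
      exact hstep ⟨i + 1, by omega⟩ (by simp)
  rw [Nat.sub_add_cancel hn, ← Fin.sum_univ_eq_sum_range, Nat.cast_pred hn, sub_add_cancel,
    extend_of_lt y _ (by omega)] at key
  simpa only [extend_of_lt _ _ (Fin.is_lt _), Fin.eta] using key

end Telescoping

theorem abs_sum_mul_le_mul_sum {ι R : Type*} [CommRing R] [LinearOrder R] [IsStrictOrderedRing R]
    (s : Finset ι) {w u : ι → R} {δ : R} (hw : ∀ i ∈ s, 0 ≤ w i) (hu : ∀ i ∈ s, |u i| ≤ δ) :
    |∑ i ∈ s, w i * u i| ≤ δ * ∑ i ∈ s, w i := by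
  rw [mul_sum]
  refine (abs_sum_le_sum_abs _ _).trans (sum_le_sum fun i hi => ?_)
  rw [abs_mul, abs_of_nonneg (hw i hi), mul_comm]
  exact mul_le_mul_of_nonneg_right (hu i hi) (hw i hi)

theorem abs_sub_natCast_le_of_round {x : ℝ} (hx : x ∈ Set.Icc 0 1) {t : ℕ}
    (ht : (1 / 2 ≤ x → t = 1) ∧ (x < 1 / 2 → t = 0)) :
    |x - t| ≤ 2 * (x * (1 - x)) := by
  obtain ⟨hx0, hx1⟩ := hx
  rcases lt_or_ge x (1 / 2) with hlt | hge
  · rw [ht.2 hlt, Nat.cast_zero, sub_zero, abs_of_nonneg hx0]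
    nlinarith
  · rw [ht.1 hge, Nat.cast_one, abs_of_nonpos (by linarith)]
    nlinarith

theorem Nat.eq_of_abs_mul_sub_lt {c S : ℕ} {M : ℝ} (h : |M * (c - S)| < M) : c = S := by
  have hM : 0 < M := (abs_nonneg _).trans_lt h
  rw [abs_mul, abs_of_pos hM] at h
  obtain ⟨hl, hr⟩ := abs_lt.mp (lt_of_mul_lt_mul_left (h.trans_eq (mul_one M).symm) hM.le)
  have hcS : c < S + 1 := by exact_mod_cast (by linarith : (c : ℝ) < S + 1)
  have hSc : S < c + 1 := by exact_mod_cast (by linarith : (S : ℝ) < c + 1)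
  omega

/-- hardness reduction: approximate solutions of the subset-sum encoding
round to exact subset-sum solutions. Let `a₁, …, a_n` be positive integers summing to `2S`,
`M = 4nS`, and `0 < ε < 1`. If `(x̂, ŷ) ∈ [0,1]ⁿ × [0,1]ⁿ` satisfies the polynomial encoding of
the subset-sum instance within additive error `ε` in each constraint, then rounding each `x̂ j`
to the nearest integer gives a 0/1 vector `x̃` with `∑ a j * x̃ j = S`. -/
theorem subset_sum_rounding
    (n : ℕ) (hn : 2 ≤ n) (a : Fin n → ℕ)
    (S : ℕ) (hS : 0 < S) (hsum : 2 * S = ∑ j, a j)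
    (M : ℕ) (hM : M = 4 * n * S)
    (ε : ℝ) (hε1 : ε < 1)
    (xh yh : Fin n → ℝ)
    (hx01 : ∀ j, 0 ≤ xh j ∧ xh j ≤ 1)
    (h1 : |(M : ℝ) * S * yh ⟨0, by omega⟩ -
            (M : ℝ) * (a ⟨0, by omega⟩ : ℝ) * xh ⟨0, by omega⟩| ≤ ε)
    (h2 : ∀ i : Fin n, 1 ≤ (i : ℕ) →
      |(M : ℝ) * S * yh i - (M : ℝ) * (a i : ℝ) * xh i -
        (M : ℝ) * S * yh ⟨(i : ℕ) - 1, Nat.lt_of_le_of_lt (Nat.sub_le _ _) i.isLt⟩| ≤ ε)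
    (h3 : |(M : ℝ) * yh ⟨n - 1, by omega⟩ - (M : ℝ)| ≤ ε)
    (h4 : ∀ j, (M : ℝ) * xh j * (1 - xh j) ≤ ε)
    (xt : Fin n → ℕ)
    (hxt : ∀ j, ((1 : ℝ) / 2 ≤ xh j → xt j = 1) ∧ (xh j < (1 : ℝ) / 2 → xt j = 0)) :
    (∑ j, a j * xt j) = S := by
  have hMR : (M : ℝ) = 4 * n * S := by rw [hM]; push_cast; ring
  have hchain := Fin.norm_sub_sum_le_of_forall_norm_sub_le (by omega)
    (fun i => (M : ℝ) * S * yh i) (fun i => (M : ℝ) * a i * xh i) h1 h2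
  have hlast : |(M : ℝ) * S * yh ⟨n - 1, by omega⟩ - M * S| ≤ S * ε := by
    rw [mul_right_comm, ← sub_mul, abs_mul, Nat.abs_cast, mul_comm]
    exact mul_le_mul_of_nonneg_left h3 (Nat.cast_nonneg S)
  have hround : |∑ j, (a j : ℝ) * (M * (xt j - xh j))| ≤ 2 * ε * (2 * S) := by
    rw [show (2 * S : ℝ) = ∑ j, (a j : ℝ) by exact_mod_cast hsum]
    refine abs_sum_mul_le_mul_sum _ (fun j _ => Nat.cast_nonneg _) fun j _ => ?_
    rw [abs_mul, Nat.abs_cast, abs_sub_comm]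
    nlinarith [abs_sub_natCast_le_of_round (hx01 j) (hxt j), h4 j, Nat.cast_nonneg (α := ℝ) M]
  have hsplit : ∑ j, (a j : ℝ) * (M * (xt j - xh j)) =
      M * ((∑ j, a j * xt j : ℕ) : ℝ) - ∑ j, (M : ℝ) * a j * xh j := by
    push_cast
    rw [mul_sum, ← sum_sub_distrib]
    exact sum_congr rfl fun j _ => by ring
  have hbudget : ((n : ℝ) + 5 * S) * ε < M := calc
    _ < ((n : ℝ) + 5 * S) * 1 := mul_lt_mul_of_pos_left hε1 (by positivity)
    _ < M := by
      have hS1 : (1 : ℝ) ≤ S := by exact_mod_cast hS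
      have hn2 : (2 : ℝ) ≤ n := by exact_mod_cast hn
      rw [hMR]; nlinarith [mul_nonneg (sub_nonneg.mpr hn2) (sub_nonneg.mpr hS1)]
  rw [Real.norm_eq_abs] at hchain
  obtain ⟨hchain_lo, hchain_hi⟩ := abs_le.mp hchain
  obtain ⟨hlast_lo, hlast_hi⟩ := abs_le.mp hlast
  obtain ⟨hround_lo, hround_hi⟩ := abs_le.mp hround
  exact Nat.eq_of_abs_mul_sub_lt (M := M) (abs_lt.mpr ⟨by linarith, by linarith⟩)
end
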